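/- arXiv:1409.1681 — 6 statements merged into one kernel-verified Lean document; each statement's English description precedes it below -/
import Mathlib

section
/- For every n ≥ 3, the disjunctive total domination number of the cycle C_n equals 2n/5 if n ≡ 0 (mod 5), and equals ⌈2(n+1)/5⌉ otherwise. -/
/-!
For `n ≥ 5` a set `S` is a disjunctive total dominating set of `C_n` iff every vertex `v`
has `v + 1 ∈ S`, `v - 1 ∈ S`, or both `v ± 2 ∈ S`. The vertices `j` with `j % 5 ∈ {0, 1}`
form such a set of the claimed size. Conversely, looking at the middle vertex shows that any
five consecutive vertices contain two elements of `S`, and double counting gives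
`2 n ≤ 5 |S|`. This is the claimed bound unless `n = 5 m + 2`, where `|S| ≥ 2 m + 2` is
needed: some seven consecutive vertices contain four elements of `S` (two adjacent ones
followed by a window of five or, if no two elements are adjacent so that `S` is closed under
`± 2`, the vertices `s - 4, s - 2, s, s + 2`), and the rest of the cycle splits into `m - 1`
windows of five. For `n = 3, 4` the answer is `2`, a lower bound in every nonempty graph.
-/

open SimpleGraph

def IsDTDSet {V : Type*} (G : SimpleGraph V) (S : Finset V) : Prop :=
  ∀ v : V, (∃ u ∈ S, G.Adj v u) ∨
    ∃ u ∈ S, ∃ w ∈ S, u ≠ w ∧ G.dist v u = 2 ∧ G.dist v w = 2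

noncomputable def dtdNum {V : Type*} (G : SimpleGraph V) : ℕ :=
  sInf {k | ∃ S : Finset V, IsDTDSet G S ∧ S.card = k}


def cycleG (n : ℕ) : SimpleGraph (Fin n) :=
  SimpleGraph.fromRel (fun a b => ((a : ℕ) + 1) % n = (b : ℕ))

open Finset Fin.CommRing

lemma SimpleGraph.dist_eq_two_iff {V : Type*} {G : SimpleGraph V} {u v : V} :
    G.dist u v = 2 ↔ u ≠ v ∧ ¬ G.Adj u v ∧ (G.commonNeighbors u v).Nonempty := by
  rw [← edist_eq_two_iff, SimpleGraph.dist, ENat.toNat_eq_iff two_ne_zero]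
  rfl

lemma IsDTDSet.two_le_card {V : Type*} [Nonempty V] {G : SimpleGraph V} {S : Finset V}
    (hS : IsDTDSet G S) : 2 ≤ #S := by
  by_contra! h
  have hS_sub : ∀ a ∈ S, ∀ b ∈ S, a = b := card_le_one.mp (by omega)
  obtain ⟨v⟩ := ‹Nonempty V›
  rcases hS v with ⟨u, hu, -⟩ | ⟨u, hu, w, hw, huw, -⟩
  · rcases hS u with ⟨u', hu', hadj⟩ | ⟨a, ha, b, hb, hab, -⟩
    · exact G.irrefl (hS_sub u' hu' u hu ▸ hadj)
    · exact hab (hS_sub a ha b hb)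
  · exact huw (hS_sub u hu w hw)

def fivePattern (n : ℕ) : Finset (Fin n) :=
  univ.filter fun j ↦ (j : ℕ) % 5 < 2

lemma card_fivePattern {n : ℕ} : #(fivePattern n) = 2 * (n / 5) + min (n % 5) 2 := by
  have count : ∀ N, (∑ j ∈ range N, if j % 5 < 2 then 1 else 0) =
      2 * (N / 5) + min (N % 5) 2 := by
    intro N
    induction N with
    | zero => rfl
    | succ N ih => rw [sum_range_succ, ih]; split_ifs <;> omega
  rw [fivePattern, card_filter, Fin.sum_univ_eq_sum_range (fun j ↦ if j % 5 < 2 then 1 else 0),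
    count]

section Cycle

variable {n : ℕ} [NeZero n]

lemma Fin.natCast_ne_zero_of_lt {k : ℕ} (hk0 : k ≠ 0) (hk : k < n) : (k : Fin n) ≠ 0 :=
  Fin.natCast_eq_zero.not.mpr (Nat.not_dvd_of_pos_of_lt (Nat.pos_of_ne_zero hk0) hk)

lemma cycleG_adj_iff (hn : 2 ≤ n) {u v : Fin n} :
    (cycleG n).Adj u v ↔ v = u + 1 ∨ v = u - 1 := by
  have hsucc : ∀ a b : Fin n, ((a : ℕ) + 1) % n = b ↔ b = a + 1 := by
    intro a b
    rw [Fin.ext_iff, Fin.val_add, Fin.val_one', Nat.one_mod_eq_one.mpr (by omega), eq_comm]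
  have h1 : (1 : Fin n) ≠ 0 := by exact_mod_cast Fin.natCast_ne_zero_of_lt one_ne_zero hn
  rw [cycleG, fromRel_adj, hsucc, hsucc, eq_comm (a := u), ← eq_sub_iff_add_eq]
  constructor
  · exact And.right
  · refine fun h ↦ ⟨?_, h⟩
    rintro rfl
    rcases h with h | h
    · exact h1 (by linear_combination -h)
    · exact h1 (by linear_combination h)

lemma cycleG_dist_eq_two_iff (hn : 4 ≤ n) {u v : Fin n} :
    (cycleG n).dist u v = 2 ↔ v = u + 2 ∨ v = u - 2 := by
  have h1 : (1 : Fin n) ≠ 0 := by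
    exact_mod_cast Fin.natCast_ne_zero_of_lt one_ne_zero (by omega)
  have h2 : (2 : Fin n) ≠ 0 := by
    exact_mod_cast Fin.natCast_ne_zero_of_lt two_ne_zero (by omega)
  have h3 : (3 : Fin n) ≠ 0 := by
    exact_mod_cast Fin.natCast_ne_zero_of_lt three_ne_zero (by omega)
  simp only [dist_eq_two_iff, Set.Nonempty, mem_commonNeighbors,
    cycleG_adj_iff (by omega : 2 ≤ n)]
  constructor
  · rintro ⟨huv, -, w, hw | hw, hv | hv⟩ <;> subst hw
    · exact absurd (by linear_combination hv) huv
    · exact Or.inl (by linear_combination -hv)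
    · exact Or.inr (by linear_combination -hv)
    · exact absurd (by linear_combination hv) huv
  · rintro (rfl | rfl)
    · refine ⟨fun h ↦ h2 (by linear_combination -h), ?_, u + 1, Or.inl rfl, Or.inr (by ring)⟩
      rintro (h | h)
      · exact h1 (by linear_combination h)
      · exact h3 (by linear_combination h)
    · refine ⟨fun h ↦ h2 (by linear_combination h), ?_, u - 1, Or.inr rfl, Or.inl (by ring)⟩
      rintro (h | h)
      · exact h3 (by linear_combination -h)
      · exact h1 (by linear_combination -h)

lemma isDTDSet_cycleG_of_forall_add_one_or_sub_one (hn : 2 ≤ n) {S : Finset (Fin n)}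
    (h : ∀ v, v + 1 ∈ S ∨ v - 1 ∈ S) : IsDTDSet (cycleG n) S := fun v ↦
  .inl <| (h v).elim (fun h ↦ ⟨_, h, (cycleG_adj_iff hn).mpr (.inl rfl)⟩)
    fun h ↦ ⟨_, h, (cycleG_adj_iff hn).mpr (.inr rfl)⟩

def IsCycleDTDSet (S : Finset (Fin n)) : Prop :=
  ∀ v, v + 1 ∈ S ∨ v - 1 ∈ S ∨ (v + 2 ∈ S ∧ v - 2 ∈ S)

lemma isDTDSet_cycleG_iff (hn : 5 ≤ n) {S : Finset (Fin n)} :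
    IsDTDSet (cycleG n) S ↔ IsCycleDTDSet S := by
  have h4 : (4 : Fin n) ≠ 0 := by
    exact_mod_cast Fin.natCast_ne_zero_of_lt four_ne_zero (by omega)
  refine forall_congr' fun v ↦ ?_
  simp only [cycleG_adj_iff (by omega : 2 ≤ n), cycleG_dist_eq_two_iff (by omega : 4 ≤ n)]
  rw [← or_assoc]
  refine or_congr (by aesop) ⟨?_, fun ⟨hp, hm⟩ ↦
    ⟨_, hp, _, hm, fun h ↦ h4 (by linear_combination h), by simp, by simp⟩⟩
  rintro ⟨a, ha, b, hb, hab, rfl | rfl, rfl | rfl⟩ <;> simp_all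

lemma isCycleDTDSet_fivePattern (hn : 5 ≤ n) : IsCycleDTDSet (fivePattern n) := by
  intro v
  have hv := v.isLt
  have h1 : ((1 : Fin n) : ℕ) = 1 := Nat.mod_eq_of_lt (show 1 < n by omega)
  have h2 : ((2 : Fin n) : ℕ) = 2 := Nat.mod_eq_of_lt (show 2 < n by omega)
  have mod_eq_ite : ∀ a, a < 2 * n → a % n = if a < n then a else a - n := fun a ha ↦ by
    split_ifs with h
    · exact Nat.mod_eq_of_lt h
    · rw [Nat.mod_eq_sub_mod (by omega), Nat.mod_eq_of_lt (by omega)]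
  simp only [fivePattern, mem_filter, mem_univ, true_and, Fin.val_add, Fin.val_sub, h1, h2]
  rw [mod_eq_ite _ (by omega), mod_eq_ite _ (by omega), mod_eq_ite _ (by omega),
    mod_eq_ite _ (by omega)]
  split_ifs <;> omega

def arcCount (S : Finset (Fin n)) (u : Fin n) (k : ℕ) : ℕ :=
  ∑ i ∈ range k, if u + (i : Fin n) ∈ S then 1 else 0

variable {S : Finset (Fin n)}

lemma arcCount_add (u : Fin n) (a b : ℕ) :
    arcCount S u (a + b) = arcCount S u a + arcCount S (u + a) b := by
  simp only [arcCount, sum_range_add, Nat.cast_add, add_assoc]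

lemma sum_ite_add_mem_eq_card (a : Fin n) : (∑ x, if a + x ∈ S then 1 else 0) = #S := by
  calc (∑ x, if a + x ∈ S then 1 else 0) = ∑ x, if x ∈ S then 1 else 0 :=
        Equiv.sum_comp (Equiv.addLeft a) (fun x ↦ if x ∈ S then 1 else 0)
    _ = #S := by simp

lemma arcCount_self (u : Fin n) : arcCount S u n = #S := by
  rw [arcCount, ← Fin.sum_univ_eq_sum_range (fun i ↦ if u + (i : Fin n) ∈ S then 1 else 0)]
  simp only [Fin.cast_val_eq_self, sum_ite_add_mem_eq_card]

lemma sum_arcCount (k : ℕ) : ∑ u, arcCount S u k = k * #S := by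
  simp only [arcCount]
  rw [sum_comm]
  simp only [add_comm _ (Nat.cast _), sum_ite_add_mem_eq_card, sum_const, card_range, smul_eq_mul]

lemma card_le_arcCount {u : Fin n} {k : ℕ} {I : Finset ℕ} (hI : I ⊆ range k)
    (hS : ∀ i ∈ I, u + (i : Fin n) ∈ S) : #I ≤ arcCount S u k := by
  rw [card_eq_sum_ones, arcCount]
  calc ∑ i ∈ I, 1 = ∑ i ∈ I, if u + (i : Fin n) ∈ S then 1 else 0 :=
        sum_congr rfl fun i hi ↦ (if_pos (hS i hi)).symm
    _ ≤ _ := sum_le_sum_of_subset hI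

lemma two_le_arcCount {u : Fin n} {k a b : ℕ} (hab : a ≠ b) (ha : a < k) (hb : b < k)
    (haS : u + (a : Fin n) ∈ S) (hbS : u + (b : Fin n) ∈ S) : 2 ≤ arcCount S u k := by
  simpa [card_pair hab] using card_le_arcCount (I := {a, b})
    (by simp [insert_subset_iff, ha, hb]) (by simp [haS, hbS])

lemma IsCycleDTDSet.two_le_arcCount_five (hS : IsCycleDTDSet S) (u : Fin n) :
    2 ≤ arcCount S u 5 := by
  have pair : ∀ a b : ℕ, a < b ∧ b < 5 → u + (a : Fin n) ∈ S → u + (b : Fin n) ∈ S →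
      2 ≤ arcCount S u 5 := fun a b h ↦ two_le_arcCount h.1.ne (by omega) h.2
  -- The middle vertex `u + 2` is dominated from inside the arc, and so is its dominating neighbour.
  have h1 := hS (u + 1)
  have h2 := hS (u + 2)
  have h3 := hS (u + 3)
  norm_num [add_assoc, add_sub_assoc] at h1 h2 h3
  rcases h2 with h₃ | h₁ | ⟨h₄, h₀⟩
  · rcases h3 with h₄ | h₂ | ⟨-, h₁⟩
    · exact pair 3 4 (by decide) (by simpa using h₃) (by simpa using h₄)
    · exact pair 2 3 (by decide) (by simpa using h₂) (by simpa using h₃)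
    · exact pair 1 3 (by decide) (by simpa using h₁) (by simpa using h₃)
  · rcases h1 with h₂ | h₀ | ⟨h₃, -⟩
    · exact pair 1 2 (by decide) (by simpa using h₁) (by simpa using h₂)
    · exact pair 0 1 (by decide) (by simpa using h₀) (by simpa using h₁)
    · exact pair 1 3 (by decide) (by simpa using h₁) (by simpa using h₃)
  · exact pair 0 4 (by decide) (by simpa using h₀) (by simpa using h₄)

lemma two_mul_le_arcCount_five_mul (h : ∀ v, 2 ≤ arcCount S v 5) (u : Fin n) (m : ℕ) :
    2 * m ≤ arcCount S u (5 * m) := by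
  induction m with
  | zero => simp
  | succ m ih =>
    have := h (u + (5 * m : ℕ))
    rw [show 5 * (m + 1) = 5 * m + 5 by ring, arcCount_add]
    omega

lemma IsCycleDTDSet.two_mul_le_five_mul_card (hS : IsCycleDTDSet S) : 2 * n ≤ 5 * #S := by
  have := sum_le_sum fun u (_ : u ∈ univ) ↦ hS.two_le_arcCount_five u
  simpa [sum_arcCount, mul_comm] using this

lemma IsCycleDTDSet.exists_four_le_arcCount_seven (hS : IsCycleDTDSet S) :
    ∃ u, 4 ≤ arcCount S u 7 := by
  by_cases hadj : ∃ a ∈ S, a + 1 ∈ S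
  · obtain ⟨a, ha, ha'⟩ := hadj
    have h2 : 2 ≤ arcCount S a 2 :=
      two_le_arcCount (a := 0) (b := 1) (by decide) (by decide) (by decide) (by simpa) (by simpa)
    have h5 := hS.two_le_arcCount_five (a + (2 : ℕ))
    exact ⟨a, (arcCount_add a 2 5).symm ▸ by omega⟩
  -- Otherwise every element of `S` is isolated, so `S` is closed under `± 2`.
  push Not at hadj
  have step : ∀ t ∈ S, t + 2 ∈ S ∧ t - 2 ∈ S := fun t ht ↦ by
    rcases hS t with h | h | h
    · exact absurd h (hadj t ht)
    · exact absurd (by simpa using ht) (hadj _ h)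
    · exact h
  obtain ⟨s, hs⟩ : S.Nonempty := by
    rcases hS 0 with h | h | ⟨h, -⟩ <;> exact ⟨_, h⟩
  obtain ⟨hs_add, hs_sub⟩ := step s hs
  have hs_sub_sub := (step _ hs_sub).2
  refine ⟨s - 4, ?_⟩
  have := card_le_arcCount (S := S) (u := s - 4) (k := 7) (I := {0, 2, 4, 6}) (by decide) ?_
  · simpa using this
  simp only [mem_insert, mem_singleton, forall_eq_or_imp, forall_eq, Nat.cast_ofNat,
    Nat.cast_zero, add_zero]
  refine ⟨?_, ?_, ?_, ?_⟩
  · rwa [show s - 4 = s - 2 - 2 by ring]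
  · rwa [show s - 4 + 2 = s - 2 by ring]
  · rwa [show s - 4 + 4 = s by ring]
  · rwa [show s - 4 + 6 = s + 2 by ring]

lemma IsCycleDTDSet.two_mul_add_four_le_card (hS : IsCycleDTDSet S) {m : ℕ}
    (hn : n = 5 * m + 7) : 2 * m + 4 ≤ #S := by
  obtain ⟨u, hu⟩ := hS.exists_four_le_arcCount_seven
  have hrest := two_mul_le_arcCount_five_mul hS.two_le_arcCount_five (u + (7 : ℕ)) m
  have hsplit : #S = arcCount S u 7 + arcCount S (u + (7 : ℕ)) (5 * m) := by
    rw [← arcCount_self u, ← arcCount_add]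
    congr 1
    omega
  omega

lemma IsCycleDTDSet.le_card (hS : IsCycleDTDSet S) (hn : 5 ≤ n) :
    2 * (n / 5) + min (n % 5) 2 ≤ #S := by
  have := hS.two_mul_le_five_mul_card
  by_cases h2 : n % 5 = 2
  · have := hS.two_mul_add_four_le_card (m := n / 5 - 1) (by omega)
    omega
  · omega

end Cycle

lemma isDTDSet_fivePattern {n : ℕ} (hn : 3 ≤ n) : IsDTDSet (cycleG n) (fivePattern n) := by
  obtain rfl | rfl | hn := (by omega : n = 3 ∨ n = 4 ∨ 5 ≤ n)
  · exact isDTDSet_cycleG_of_forall_add_one_or_sub_one (by norm_num) (by decide)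
  · exact isDTDSet_cycleG_of_forall_add_one_or_sub_one (by norm_num) (by decide)
  · have : NeZero n := ⟨by omega⟩
    exact (isDTDSet_cycleG_iff hn).mpr (isCycleDTDSet_fivePattern hn)

/-- The disjunctive total domination number of the cycle C_n. -/
theorem dtd_cycle (n : ℕ) (hn : 3 ≤ n) :
    dtdNum (cycleG n) =
      if n % 5 = 0 then 2 * n / 5 else (2 * (n + 1) + 4) / 5 := by
  have : NeZero n := ⟨by omega⟩
  have hval : (if n % 5 = 0 then 2 * n / 5 else (2 * (n + 1) + 4) / 5) = #(fivePattern n) := by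
    rw [card_fivePattern]
    split_ifs <;> omega
  rw [hval]
  refine le_antisymm (Nat.sInf_le ⟨_, isDTDSet_fivePattern hn, rfl⟩)
    (le_csInf ⟨_, _, isDTDSet_fivePattern hn, rfl⟩ ?_)
  rintro _ ⟨S, hS, rfl⟩
  rw [card_fivePattern]
  obtain hn' | hn' := lt_or_ge n 5
  · have : Nonempty (Fin n) := ⟨0⟩
    have := hS.two_le_card
    omega
  · exact ((isDTDSet_cycleG_iff hn').mp hS).le_card hn'
end

section
/- For every n ≥ 2, the disjunctive total domination number of the path P_n equals ⌈2(n+1)/5⌉ + 1 if n ≡ 1 (mod 5), and equals ⌈2(n+1)/5⌉ otherwise. -/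
open SimpleGraph

def pathG (n : ℕ) : SimpleGraph (Fin n) :=
  SimpleGraph.fromRel (fun a b => (a : ℕ) + 1 = (b : ℕ))

/-!
Lower bound: a vertex is dominated either by a neighbour or by both vertices at distance two,
so in a window of five consecutive vertices the middle one, together with its dominator, forces
two elements of the set into the window. The first three vertices contain two elements, and the
last `n % 5 + 2` vertices contain two (one if `5 ∣ n`); filling the rest with windows gives
`2 ⌊n / 5⌋ + 2` (resp. `+ 1`).

Upper bound: the vertices `≡ 1, 2 (mod 5)` dominate everything except near the right end, which
one or two extra vertices repair.
-/

open Finset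

lemma pathG_adj {n : ℕ} {u v : Fin n} :
    (pathG n).Adj u v ↔ (u : ℕ) + 1 = v ∨ (v : ℕ) + 1 = u := by
  simp only [pathG, fromRel_adj, ne_eq, Fin.ext_iff]
  omega

lemma pathG_dist_eq_two_iff {n : ℕ} {u v : Fin n} :
    (pathG n).dist u v = 2 ↔ (u : ℕ) + 2 = v ∨ (v : ℕ) + 2 = u := by
  rw [SimpleGraph.dist, ENat.toNat_eq_iff two_ne_zero, Nat.cast_ofNat, edist_eq_two_iff]
  simp only [Set.Nonempty, mem_commonNeighbors, pathG_adj, ne_eq, Fin.ext_iff]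
  constructor
  · rintro ⟨huv, -, w, hw⟩
    omega
  · rintro (h | h)
    · exact ⟨by omega, by omega, ⟨u + 1, by have := v.isLt; omega⟩, by grind⟩
    · exact ⟨by omega, by omega, ⟨v + 1, by have := u.isLt; omega⟩, by grind⟩

/-- The disjunctive total domination condition of `P_n`, read on the vertex labels `0, …, n - 1`.
The guards `0 < a` and `1 < a` keep the truncated subtractions honest. -/
def IsPathDTD (n : ℕ) (T : Finset ℕ) : Prop :=
  ∀ a < n, a + 1 ∈ T ∨ (0 < a ∧ a - 1 ∈ T) ∨ (1 < a ∧ a - 2 ∈ T ∧ a + 2 ∈ T)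

lemma isDTDSet_pathG_iff {n : ℕ} {S : Finset (Fin n)} :
    IsDTDSet (pathG n) S ↔ IsPathDTD n (S.map Fin.valEmbedding) := by
  simp only [IsDTDSet, IsPathDTD, mem_map, Fin.valEmbedding_apply, pathG_adj,
    pathG_dist_eq_two_iff]
  constructor
  · intro h a ha
    rcases h ⟨a, ha⟩ with ⟨u, hu, hadj⟩ | ⟨u, hu, w, hw, hne, hdu, hdw⟩ <;> grind
  · intro h v
    rcases h v v.isLt with ⟨u, hu, hv⟩ | ⟨hv, u, hu, hvu⟩ | ⟨hv, ⟨u, hu, hvu⟩, ⟨w, hw, hvw⟩⟩ <;>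
      grind

lemma map_valEmbedding_subset_range {n : ℕ} (S : Finset (Fin n)) :
    S.map Fin.valEmbedding ⊆ range n := by
  intro x hx
  obtain ⟨u, -, rfl⟩ := mem_map.1 hx
  exact mem_range.2 u.isLt

lemma map_valEmbedding_filter_val_mem {n : ℕ} {T : Finset ℕ} (hT : T ⊆ range n) :
    ({u : Fin n | (u : ℕ) ∈ T} : Finset (Fin n)).map Fin.valEmbedding = T := by
  ext x
  simp only [mem_map, mem_filter, mem_univ, true_and, Fin.valEmbedding_apply]
  exact ⟨by rintro ⟨u, hu, rfl⟩; exact hu, fun hx => ⟨⟨x, mem_range.1 (hT hx)⟩, hx, rfl⟩⟩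

lemma card_inter_Ico_add_card_inter_Ico (T : Finset ℕ) {a b c : ℕ} (hab : a ≤ b) (hbc : b ≤ c) :
    #(T ∩ Ico a b) + #(T ∩ Ico b c) = #(T ∩ Ico a c) := by
  rw [← Ico_union_Ico_eq_Ico hab hbc, inter_union_distrib_left, card_union_of_disjoint]
  exact (Ico_disjoint_Ico_consecutive a b c).mono inf_le_right inf_le_right

lemma two_le_card_inter_Ico {T : Finset ℕ} {a b x y : ℕ} (hx : x ∈ T) (hy : y ∈ T) (hxy : x ≠ y)
    (hxI : a ≤ x ∧ x < b) (hyI : a ≤ y ∧ y < b) : 2 ≤ #(T ∩ Ico a b) :=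
  one_lt_card.2 ⟨x, by simp [hx, hxI], y, by simp [hy, hyI], hxy⟩

namespace IsPathDTD

variable {n : ℕ} {T : Finset ℕ}

lemma one_mem (h : IsPathDTD n T) (hn : 0 < n) : 1 ∈ T := by
  simpa using h 0 hn

lemma two_le_card_inter_Ico_zero_three (h : IsPathDTD n T) (hn : 2 ≤ n) :
    2 ≤ #(T ∩ Ico 0 3) := by
  have h1 := h.one_mem (by omega)
  rcases h 1 (by omega) with h2 | ⟨-, h0⟩ | ⟨h11, -⟩
  · exact two_le_card_inter_Ico h1 h2 (by omega) (by omega) (by omega)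
  · exact two_le_card_inter_Ico h1 h0 (by omega) (by omega) (by omega)
  · omega

lemma sub_two_mem (h : IsPathDTD n T) (hT : T ⊆ range n) (hn : 2 ≤ n) : n - 2 ∈ T := by
  rcases h (n - 1) (by omega) with hn' | ⟨-, h'⟩ | ⟨-, -, hn'⟩
  · have := mem_range.1 (hT hn'); omega
  · rwa [Nat.sub_sub] at h'
  · have := mem_range.1 (hT hn'); omega

lemma sub_one_mem_or_sub_three_mem (h : IsPathDTD n T) (hT : T ⊆ range n) (hn : 3 ≤ n) :
    n - 1 ∈ T ∨ n - 3 ∈ T := by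
  rcases h (n - 2) (by omega) with h' | ⟨-, h'⟩ | ⟨-, -, hn'⟩
  · left; rwa [show n - 2 + 1 = n - 1 by omega] at h'
  · right; rwa [Nat.sub_sub] at h'
  · have := mem_range.1 (hT hn'); omega

lemma two_le_card_inter_Ico_add_five (h : IsPathDTD n T) {a : ℕ} (ha : a + 5 ≤ n) :
    2 ≤ #(T ∩ Ico a (a + 5)) := by
  rcases h (a + 2) (by omega) with h3 | ⟨-, h1⟩ | ⟨-, h0, h4⟩
  · rcases h (a + 3) (by omega) with h4 | ⟨-, h2⟩ | ⟨-, h1, -⟩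
    · exact two_le_card_inter_Ico h3 h4 (by omega) (by omega) (by omega)
    · exact two_le_card_inter_Ico h3 h2 (by omega) (by omega) (by omega)
    · exact two_le_card_inter_Ico h3 h1 (by omega) (by omega) (by omega)
  · rcases h (a + 1) (by omega) with h2 | ⟨-, h0⟩ | ⟨-, -, h3⟩
    · exact two_le_card_inter_Ico h1 h2 (by omega) (by omega) (by omega)
    · exact two_le_card_inter_Ico h1 h0 (by omega) (by omega) (by omega)
    · exact two_le_card_inter_Ico h1 h3 (by omega) (by omega) (by omega)
  · exact two_le_card_inter_Ico h0 h4 (by omega) (by omega) (by omega)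

lemma le_card_inter_Ico_add_mul_five (h : IsPathDTD n T) (k : ℕ) {a : ℕ} (ha : a + 5 * k ≤ n) :
    2 * k ≤ #(T ∩ Ico a (a + 5 * k)) := by
  induction k generalizing a with
  | zero => simp
  | succ k ih =>
    have hfirst := h.two_le_card_inter_Ico_add_five (a := a) (by omega)
    have hrest := ih (a := a + 5) (by omega)
    rw [show a + 5 + 5 * k = a + 5 * (k + 1) by ring] at hrest
    have := card_inter_Ico_add_card_inter_Ico T (a := a) (b := a + 5) (c := a + 5 * (k + 1))
      (by omega) (by omega)
    omega

lemma le_card (h : IsPathDTD n T) (hT : T ⊆ range n) (hn : 2 ≤ n) :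
    2 * (n / 5) + (if n % 5 = 0 then 1 else 2) ≤ #T := by
  have hfirst := h.two_le_card_inter_Ico_zero_three hn
  have hsub (a b : ℕ) : #(T ∩ Ico a b) ≤ #T := card_le_card inter_subset_left
  obtain hm | hm : n / 5 = 0 ∨ 1 ≤ n / 5 := by omega
  · have := hsub 0 3
    split_ifs <;> omega
  have hmid := h.le_card_inter_Ico_add_mul_five (n / 5 - 1) (a := 3) (by omega)
  set b := 3 + 5 * (n / 5 - 1)
  have hlast : (if n % 5 = 0 then 1 else 2) ≤ #(T ∩ Ico b n) := by
    have hn2 := h.sub_two_mem hT hn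
    split_ifs
    · exact card_pos.2 ⟨n - 2, by simp [hn2]; omega⟩
    · rcases h.sub_one_mem_or_sub_three_mem hT (by omega) with h' | h' <;>
        exact two_le_card_inter_Ico hn2 h' (by omega) (by omega) (by omega)
  have := card_inter_Ico_add_card_inter_Ico T (a := 0) (b := 3) (c := b) (by omega) (by omega)
  have := card_inter_Ico_add_card_inter_Ico T (a := 0) (b := b) (c := n) (by omega) (by omega)
  have := hsub 0 n
  omega

end IsPathDTD

def pathDTDSet (n : ℕ) : Finset ℕ :=
  {x ∈ range (n - 2) | x % 5 = 1 ∨ x % 5 = 2} ∪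
    if n % 5 = 0 ∨ n % 5 = 4 then {n - 2} else {n - 2, n - 1}

lemma isPathDTD_pathDTDSet {n : ℕ} (hn : 2 ≤ n) : IsPathDTD n (pathDTDSet n) := by
  intro a ha
  simp only [pathDTDSet, mem_union, mem_filter, mem_range]
  split_ifs <;> simp only [mem_singleton, mem_insert] <;> omega

lemma pathDTDSet_subset_range {n : ℕ} (hn : 2 ≤ n) : pathDTDSet n ⊆ range n := by
  intro x hx
  simp only [pathDTDSet, mem_union, mem_filter, mem_range] at hx ⊢
  split_ifs at hx <;> simp only [mem_singleton, mem_insert] at hx <;> omega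

lemma card_filter_range_mod_five (k : ℕ) :
    #{x ∈ range k | x % 5 = 1 ∨ x % 5 = 2} = (k + 3) / 5 + (k + 2) / 5 := by
  induction k with
  | zero => rfl
  | succ k ih =>
    rw [range_add_one, filter_insert]
    split_ifs
    · rw [card_insert_of_notMem (by simp), ih]; omega
    · rw [ih]; omega

lemma card_pathDTDSet {n : ℕ} (hn : 2 ≤ n) :
    #(pathDTDSet n) = 2 * (n / 5) + (if n % 5 = 0 then 1 else 2) := by
  rw [pathDTDSet, card_union_of_disjoint, card_filter_range_mod_five]
  · split_ifs <;> simp only [card_singleton, card_pair (by omega : n - 2 ≠ n - 1)] <;> omega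
  · rw [Finset.disjoint_left]
    intro x hx
    simp only [mem_filter, mem_range] at hx
    split_ifs <;> simp only [mem_singleton, mem_insert] <;> omega

lemma dtdNum_eq {V : Type*} {G : SimpleGraph V} {k : ℕ}
    (hex : ∃ S, IsDTDSet G S ∧ #S = k) (hmin : ∀ S, IsDTDSet G S → k ≤ #S) :
    dtdNum G = k :=
  le_antisymm (Nat.sInf_le hex) (le_csInf ⟨k, hex⟩ (by rintro _ ⟨S, hS, rfl⟩; exact hmin S hS))

/-- The disjunctive total domination number of the path P_n. -/
theorem dtd_path (n : ℕ) (hn : 2 ≤ n) :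
    dtdNum (pathG n) =
      if n % 5 = 1 then (2 * (n + 1) + 4) / 5 + 1 else (2 * (n + 1) + 4) / 5 := by
  have hformula : (if n % 5 = 1 then (2 * (n + 1) + 4) / 5 + 1 else (2 * (n + 1) + 4) / 5) =
      2 * (n / 5) + (if n % 5 = 0 then 1 else 2) := by
    split_ifs <;> omega
  have hset := map_valEmbedding_filter_val_mem (pathDTDSet_subset_range hn)
  rw [hformula]
  refine dtdNum_eq ⟨({u | (u : ℕ) ∈ pathDTDSet n} : Finset (Fin n)), ?_, ?_⟩ fun S hS => ?_
  · rw [isDTDSet_pathG_iff, hset]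
    exact isPathDTD_pathDTDSet hn
  · rw [← card_map Fin.valEmbedding, hset, card_pathDTDSet hn]
  · rw [← card_map Fin.valEmbedding]
    exact (isDTDSet_pathG_iff.1 hS).le_card (map_valEmbedding_subset_range S) hn
end

section
/- If G is a daisy (a connected graph obtained from k ≥ 2 disjoint cycles by identifying one vertex from each cycle into a single vertex) of order n, then γ_t^d(G) ≤ (n−1)/2. -/
/-!
Put the centre into `S` and, on petal `i` (the path `j = 0, …, m i - 1` whose two ends are
adjacent to the centre), the vertices `j ≥ 3` with `j ≡ 3, 0 (mod 4)`, i.e. the adjacent pairs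
`{3, 4}, {7, 8}, …`; a petal with `m i = 3` takes `j = 2` instead. Every petal vertex other than
`j = 1` then has a neighbour in `S`, while `j = 1` sees the centre and `j = 3` at distance 2.
A petal contributes at most `(m i - 1) / 2` vertices, so with `k ≥ 2` petals the centre is paid
for. The centre is dominated as soon as some petal contains its last vertex `j = m i - 1`; if none
does, every petal contributes at most `(m i - 2) / 2` vertices, which pays for adding the first
vertex of one petal.
-/

open SimpleGraph

def daisy (k : ℕ) (m : Fin k → ℕ) :
    SimpleGraph (Option ((i : Fin k) × Fin (m i))) :=
  SimpleGraph.fromRel (fun a b =>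
    match a, b with
    | none, some ⟨i, j⟩ => (j : ℕ) = 0 ∨ (j : ℕ) = m i - 1
    | some ⟨i, j⟩, some ⟨i', j'⟩ => i = i' ∧ (j : ℕ) + 1 = (j' : ℕ)
    | _, _ => False)

open Finset

theorem Fin.card_filter_univ_val (n : ℕ) (p : ℕ → Prop) [DecidablePred p] :
    #{j : Fin n | p j} = #{j ∈ range n | p j} := by
  rw [← card_map Fin.valEmbedding, ← Nat.Iio_eq_range, ← Fin.map_valEmbedding_univ,
    filter_map]
  rfl

theorem SimpleGraph.dist_eq_two_of_adj_of_adj {V : Type*} {G : SimpleGraph V} {u v w : V}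
    (huw : G.Adj u w) (hwv : G.Adj w v) (hne : u ≠ v) (hnadj : ¬G.Adj u v) :
    G.dist u v = 2 := by
  rw [dist, edist_eq_two_iff.2 ⟨hne, hnadj, w, huw, hwv.symm⟩]
  rfl

section DisjunctiveTotalDomination

variable {V : Type*} {G : SimpleGraph V} {S : Finset V}

def DTDominates (G : SimpleGraph V) (S : Finset V) (v : V) : Prop :=
  (∃ u ∈ S, G.Adj v u) ∨
    ∃ u ∈ S, ∃ w ∈ S, u ≠ w ∧ G.dist v u = 2 ∧ G.dist v w = 2

theorem isDTDSet_iff_forall_dtDominates : IsDTDSet G S ↔ ∀ v, DTDominates G S v :=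
  Iff.rfl

theorem DTDominates.of_adj {u v : V} (hu : u ∈ S) (h : G.Adj v u) : DTDominates G S v :=
  Or.inl ⟨u, hu, h⟩

theorem dtdNum_le_card (h : IsDTDSet G S) : dtdNum G ≤ #S :=
  Nat.sInf_le ⟨S, h, rfl⟩

end DisjunctiveTotalDomination

section Daisy

variable {k : ℕ} {m : Fin k → ℕ} {i : Fin k}

theorem daisy_adj_center_iff {j : Fin (m i)} :
    (daisy k m).Adj (some ⟨i, j⟩) none ↔ (j : ℕ) = 0 ∨ (j : ℕ) = m i - 1 := by
  rw [adj_comm, daisy, fromRel_adj]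
  simp

theorem daisy_adj_petal_iff {a b : Fin (m i)} :
    (daisy k m).Adj (some ⟨i, a⟩) (some ⟨i, b⟩) ↔
      (a : ℕ) + 1 = b ∨ (b : ℕ) + 1 = a := by
  rw [daisy, fromRel_adj]
  simp only [ne_eq, Option.some_inj, Sigma.mk.inj_iff, heq_eq_eq, true_and]
  constructor
  · rintro ⟨-, h | h⟩ <;> simp [h]
  · intro h
    exact ⟨by rintro rfl; omega, by simpa using h⟩

theorem daisy_dist_petal_eq_two {a b : Fin (m i)} (h : (a : ℕ) + 2 = b) :
    (daisy k m).dist (some ⟨i, a⟩) (some ⟨i, b⟩) = 2 :=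
  dist_eq_two_of_adj_of_adj (w := some ⟨i, ⟨a + 1, by omega⟩⟩)
    (daisy_adj_petal_iff.2 (Or.inl rfl)) (daisy_adj_petal_iff.2 (Or.inl (by simp; omega)))
    (by simp; omega) (by rw [daisy_adj_petal_iff]; omega)

theorem daisy_dist_center_eq_two {j : Fin (m i)} (hj : (j : ℕ) = 1) (hm : 3 ≤ m i) :
    (daisy k m).dist (some ⟨i, j⟩) none = 2 :=
  dist_eq_two_of_adj_of_adj (w := some ⟨i, ⟨0, by omega⟩⟩)
    (daisy_adj_petal_iff.2 (Or.inr (by simp [hj]))) (daisy_adj_center_iff.2 (Or.inl rfl))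
    (by simp) (by rw [daisy_adj_center_iff]; omega)

end Daisy

section Pattern

def petalPattern (M j : ℕ) : Prop :=
  3 ≤ j ∧ (j % 4 = 0 ∨ j % 4 = 3) ∨ M = 3 ∧ j = 2

instance (M : ℕ) : DecidablePred (petalPattern M) := fun _ => by
  unfold petalPattern; infer_instance

theorem card_filter_range_pairs (n : ℕ) :
    #{j ∈ range n | 3 ≤ j ∧ (j % 4 = 0 ∨ j % 4 = 3)} = n / 4 + (n - 1) / 4 := by
  induction n with
  | zero => simp
  | succ n ih =>
    rw [range_add_one, filter_insert]
    split_ifs with h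
    · rw [card_insert_of_notMem (by simp)]; omega
    · omega

theorem card_petalPattern_of_ne_three {M : ℕ} (hM : M ≠ 3) :
    #{j ∈ range M | petalPattern M j} = M / 4 + (M - 1) / 4 := by
  rw [← card_filter_range_pairs]
  exact congrArg card (filter_congr fun j _ => by simp [petalPattern, hM])

theorem two_mul_card_petalPattern_add_one_le {M : ℕ} (hM : 2 ≤ M) :
    2 * #{j ∈ range M | petalPattern M j} + 1 ≤ M := by
  by_cases h3 : M = 3
  · subst h3; decide
  · rw [card_petalPattern_of_ne_three h3]; omega

theorem two_mul_card_petalPattern_add_two_le {M : ℕ} (hM : 2 ≤ M)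
    (hlast : ¬petalPattern M (M - 1)) : 2 * #{j ∈ range M | petalPattern M j} + 2 ≤ M := by
  simp only [petalPattern] at hlast
  rw [card_petalPattern_of_ne_three (by omega)]
  omega

end Pattern

section DaisySet

variable {k : ℕ} {m : Fin k → ℕ}

def daisyDTDSet (k : ℕ) (m : Fin k → ℕ) : Finset (Option ((i : Fin k) × Fin (m i))) :=
  insertNone (univ.sigma fun i => {j : Fin (m i) | petalPattern (m i) j})

theorem none_mem_daisyDTDSet : none ∈ daisyDTDSet k m :=
  none_mem_insertNone

theorem some_mem_daisyDTDSet {i : Fin k} {j : Fin (m i)} :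
    some ⟨i, j⟩ ∈ daisyDTDSet k m ↔ petalPattern (m i) j := by
  simp [daisyDTDSet]

theorem two_mul_card_daisyDTDSet_add_le {e : ℕ}
    (h : ∀ i, 2 * #{j ∈ range (m i) | petalPattern (m i) j} + e ≤ m i) :
    2 * #(daisyDTDSet k m) + k * e ≤ ∑ i, m i + 2 := by
  have hsum : ∑ i, (2 * #{j ∈ range (m i) | petalPattern (m i) j} + e) ≤ ∑ i, m i :=
    sum_le_sum fun i _ => h i
  rw [sum_add_distrib, ← mul_sum, sum_const, card_univ, Fintype.card_fin, smul_eq_mul] at hsum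
  rw [daisyDTDSet, card_insertNone, card_sigma]
  simp only [Fin.card_filter_univ_val]
  omega

variable {S : Finset (Option ((i : Fin k) × Fin (m i)))}

theorem dtDominates_daisy_petal (hS : daisyDTDSet k m ⊆ S) (i : Fin k) (j : Fin (m i)) :
    DTDominates (daisy k m) S (some ⟨i, j⟩) := by
  obtain ⟨j, hj⟩ := j
  have of_nbr (j' : ℕ) (hj' : j' < m i) (hp : petalPattern (m i) j')
      (h : j + 1 = j' ∨ j' + 1 = j) :
      DTDominates (daisy k m) S (some ⟨i, ⟨j, hj⟩⟩) :=
    .of_adj (hS ((some_mem_daisyDTDSet (j := ⟨j', hj'⟩)).2 hp)) (daisy_adj_petal_iff.2 h)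
  by_cases hend : j = 0 ∨ j = m i - 1
  · exact .of_adj (hS none_mem_daisyDTDSet) (daisy_adj_center_iff.2 hend)
  by_cases h3 : m i = 3
  · exact of_nbr 2 (by omega) (Or.inr ⟨h3, rfl⟩) (by omega)
  by_cases h1 : j = 1
  · subst h1
    exact Or.inr ⟨some ⟨i, ⟨3, by omega⟩⟩, hS (some_mem_daisyDTDSet.2 (Or.inl (by simp))),
      none, hS none_mem_daisyDTDSet, by simp, daisy_dist_petal_eq_two rfl,
      daisy_dist_center_eq_two rfl (by omega)⟩
  by_cases hlow : j % 4 ≤ 1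
  · exact of_nbr (j - 1) (by omega) (Or.inl (by omega)) (Or.inr (by omega))
  · exact of_nbr (j + 1) (by omega) (Or.inl (by omega)) (Or.inl rfl)

theorem isDTDSet_daisy (hS : daisyDTDSet k m ⊆ S)
    (hcenter : ∃ u ∈ S, (daisy k m).Adj none u) : IsDTDSet (daisy k m) S :=
  isDTDSet_iff_forall_dtDominates.2 fun
    | none => Or.inl hcenter
    | some ⟨i, j⟩ => dtDominates_daisy_petal hS i j

end DaisySet

/-- Petal `i` is a cycle of length `m i + 1` through the centre `none`, so the order of the daisy
is `n = 1 + ∑ m i`. -/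
theorem dtd_daisy_le (k : ℕ) (hk : 2 ≤ k) (m : Fin k → ℕ) (hm : ∀ i, 2 ≤ m i) :
    2 * dtdNum (daisy k m) ≤ ∑ i, m i := by
  by_cases hlast : ∃ i, petalPattern (m i) (m i - 1)
  · obtain ⟨i, hi⟩ := hlast
    have hS : IsDTDSet (daisy k m) (daisyDTDSet k m) :=
      isDTDSet_daisy subset_rfl ⟨some ⟨i, ⟨m i - 1, by have := hm i; omega⟩⟩,
        some_mem_daisyDTDSet.2 hi, (daisy_adj_center_iff.2 (Or.inr rfl)).symm⟩
    have hcard := two_mul_card_daisyDTDSet_add_le (e := 1) fun i =>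
      two_mul_card_petalPattern_add_one_le (hm i)
    have := dtdNum_le_card hS
    omega
  · push Not at hlast
    let i₀ : Fin k := ⟨0, by omega⟩
    let x : Option ((i : Fin k) × Fin (m i)) := some ⟨i₀, ⟨0, by have := hm i₀; omega⟩⟩
    have hS : IsDTDSet (daisy k m) (insert x (daisyDTDSet k m)) :=
      isDTDSet_daisy (subset_insert _ _)
        ⟨x, mem_insert_self _ _, (daisy_adj_center_iff.2 (Or.inl rfl)).symm⟩
    have hcard := two_mul_card_daisyDTDSet_add_le (e := 2) fun i =>
      two_mul_card_petalPattern_add_two_le (hm i) (hlast i)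
    have := (dtdNum_le_card hS).trans (card_insert_le _ _)
    omega
end

section
/- Let G be a daisy with k ≥ 2 petals and let v be the identified vertex (the vertex of degree 2k). If no minimum disjunctive total dominating set of G contains v, then some minimum disjunctive total dominating set of G totally dominates v, i.e., v has a neighbor in some minimum DTD-set. -/
open SimpleGraph

variable {k : ℕ} {m : Fin k → ℕ}

lemma daisy_adj_none_some {i : Fin k} {j : Fin (m i)} :
    (daisy k m).Adj none (some ⟨i, j⟩) ↔ ((j : ℕ) = 0 ∨ (j : ℕ) = m i - 1) := by
  rw [daisy, SimpleGraph.fromRel_adj]; simp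

lemma daisy_adj_some_some {i : Fin k} {j j' : Fin (m i)} :
    (daisy k m).Adj (some ⟨i, j⟩) (some ⟨i, j'⟩) ↔
      ((j : ℕ) + 1 = (j' : ℕ) ∨ (j' : ℕ) + 1 = (j : ℕ)) := by
  rw [daisy, SimpleGraph.fromRel_adj]
  constructor
  · rintro ⟨hne, h | h⟩
    · exact Or.inl h.2
    · exact Or.inr h.2
  · rintro (h | h)
    · exact ⟨by simp [Fin.ext_iff]; omega, Or.inl ⟨rfl, h⟩⟩
    · exact ⟨by simp [Fin.ext_iff]; omega, Or.inr ⟨rfl, h⟩⟩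

lemma daisy_not_adj_cross {i i' : Fin k} (h : i ≠ i') {j : Fin (m i)} {j' : Fin (m i')} :
    ¬ (daisy k m).Adj (some ⟨i, j⟩) (some ⟨i', j'⟩) := by
  rw [daisy, SimpleGraph.fromRel_adj]
  rintro ⟨hne, ⟨h1, -⟩ | ⟨h1, -⟩⟩
  · exact h h1
  · exact h h1.symm

lemma daisy_nbr_none {u : Option ((i : Fin k) × Fin (m i))}
    (h : (daisy k m).Adj none u) :
    ∃ i : Fin k, ∃ j : Fin (m i), u = some ⟨i, j⟩ ∧ ((j : ℕ) = 0 ∨ (j : ℕ) = m i - 1) := by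
  match u with
  | none => exact absurd h (SimpleGraph.irrefl _)
  | some ⟨i, j⟩ => exact ⟨i, j, rfl, daisy_adj_none_some.mp h⟩

lemma daisy_nbr_some {i : Fin k} {j : Fin (m i)} {u : Option ((i : Fin k) × Fin (m i))}
    (h : (daisy k m).Adj (some ⟨i, j⟩) u) :
    (u = none ∧ ((j : ℕ) = 0 ∨ (j : ℕ) = m i - 1)) ∨
      (∃ j' : Fin (m i), u = some ⟨i, j'⟩ ∧
        ((j : ℕ) + 1 = (j' : ℕ) ∨ (j' : ℕ) + 1 = (j : ℕ))) := by
  match u with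
  | none => exact Or.inl ⟨rfl, daisy_adj_none_some.mp h.symm⟩
  | some ⟨i', j'⟩ =>
    by_cases hii : i = i'
    · subst hii
      exact Or.inr ⟨j', rfl, daisy_adj_some_some.mp h⟩
    · exact absurd h (daisy_not_adj_cross hii)

lemma dist_two_spec {V : Type*} {G : SimpleGraph V} {x y : V} (h : G.dist x y = 2) :
    x ≠ y ∧ ¬ G.Adj x y ∧ ∃ z, G.Adj x z ∧ G.Adj z y := by
  have hr : G.Reachable x y := by
    by_contra hc
    rw [SimpleGraph.dist_eq_zero_of_not_reachable hc] at h; omega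
  refine ⟨?_, ?_, ?_⟩
  · rintro rfl; rw [SimpleGraph.dist_self] at h; omega
  · intro hadj; rw [SimpleGraph.dist_eq_one_iff_adj.mpr hadj] at h; omega
  · obtain ⟨w, hw⟩ := hr.exists_walk_length_eq_dist
    rw [h] at hw
    match w, hw with
    | .cons h1 (.cons h2 .nil), _ => exact ⟨_, h1, h2⟩

lemma dist_eq_two {V : Type*} {G : SimpleGraph V} {x y z : V}
    (h1 : G.Adj x z) (h2 : G.Adj z y) (hne : x ≠ y) (hna : ¬ G.Adj x y) :
    G.dist x y = 2 := by
  have hle : G.dist x y ≤ 2 := by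
    have := SimpleGraph.dist_le (SimpleGraph.Walk.cons h1 (SimpleGraph.Walk.cons h2 .nil))
    simpa using this
  have h0 : G.dist x y ≠ 0 := by
    have hr : G.Reachable x y := ⟨.cons h1 (.cons h2 .nil)⟩
    have := hr.pos_dist_of_ne hne
    omega
  have h1' : G.dist x y ≠ 1 := fun hc => hna (SimpleGraph.dist_eq_one_iff_adj.mp hc)
  omega

section Forcing

variable {S : Finset (Option ((i : Fin k) × Fin (m i)))}

/-- Under the standing assumptions (center and endpoints not in `S`), any member of `S`
at distance exactly 2 from a petal vertex `⟨i,j⟩` lies in the same petal with index `j ± 2`. -/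
lemma dist2_classify
    (hnone : none ∉ S)
    (hend : ∀ (i : Fin k) (jj : Fin (m i)), ((jj : ℕ) = 0 ∨ (jj : ℕ) = m i - 1) →
      some ⟨i, jj⟩ ∉ S)
    {i : Fin k} {j : Fin (m i)} {s : Option ((i : Fin k) × Fin (m i))}
    (hd : (daisy k m).dist (some ⟨i, j⟩) s = 2) (hsS : s ∈ S) :
    ∃ j'' : Fin (m i), s = some ⟨i, j''⟩ ∧
      ((j : ℕ) + 2 = (j'' : ℕ) ∨ (j'' : ℕ) + 2 = (j : ℕ)) := by
  obtain ⟨hne, hna, z, hz1, hz2⟩ := dist_two_spec hd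
  rcases daisy_nbr_some hz1 with ⟨rfl, -⟩ | ⟨j', rfl, hj'⟩
  · obtain ⟨i2, j2, rfl, hc2⟩ := daisy_nbr_none hz2
    exact absurd hsS (hend i2 j2 hc2)
  · rcases daisy_nbr_some hz2 with ⟨rfl, -⟩ | ⟨j'', rfl, hj''⟩
    · exact absurd hsS hnone
    · refine ⟨j'', rfl, ?_⟩
      have hjj : (j : ℕ) ≠ (j'' : ℕ) := by
        intro h
        have : j = j'' := Fin.ext h
        subst this
        exact hne rfl
      rcases hj' with h1 | h1 <;> rcases hj'' with h2 | h2 <;> omega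

variable (hS : IsDTDSet (daisy k m) S)
    (hnone : none ∉ S)
    (hend : ∀ (i : Fin k) (jj : Fin (m i)), ((jj : ℕ) = 0 ∨ (jj : ℕ) = m i - 1) →
      some ⟨i, jj⟩ ∉ S)

include hS hnone hend

lemma daisy_m_ge_four (hm : ∀ i, 2 ≤ m i) (i : Fin k) : 4 ≤ m i := by
  by_contra hc
  have h2 := hm i
  have hcase : m i = 2 ∨ m i = 3 := by omega
  rcases hcase with hmi | hmi
  · -- m i = 2 : look at vertex ⟨i, 0⟩
    have h0 : (0 : ℕ) < m i := by omega
    rcases hS (some ⟨i, ⟨0, h0⟩⟩) with ⟨u, huS, hadj⟩ | ⟨u, huS, w, hwS, hneuw, hdu, hdw⟩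
    · rcases daisy_nbr_some hadj with ⟨rfl, -⟩ | ⟨j', rfl, hj'⟩
      · exact hnone huS
      · have hlt : (j' : ℕ) < m i := j'.isLt
        have e0 : ((⟨0, h0⟩ : Fin (m i)) : ℕ) = 0 := rfl
        have : (j' : ℕ) = m i - 1 := by omega
        exact hend i j' (Or.inr this) huS
    · obtain ⟨j'', rfl, hj''⟩ := dist2_classify hnone hend hdu huS
      have hlt : (j'' : ℕ) < m i := j''.isLt
      have e0 : ((⟨0, h0⟩ : Fin (m i)) : ℕ) = 0 := rfl
      omega
  · -- m i = 3 : look at vertex ⟨i, 1⟩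
    have h1 : (1 : ℕ) < m i := by omega
    rcases hS (some ⟨i, ⟨1, h1⟩⟩) with ⟨u, huS, hadj⟩ | ⟨u, huS, w, hwS, hneuw, hdu, hdw⟩
    · rcases daisy_nbr_some hadj with ⟨rfl, hc⟩ | ⟨j', rfl, hj'⟩
      · have e1 : ((⟨1, h1⟩ : Fin (m i)) : ℕ) = 1 := rfl
        omega
      · have hlt := j'.isLt
        have e1 : ((⟨1, h1⟩ : Fin (m i)) : ℕ) = 1 := rfl
        have : (j' : ℕ) = 0 ∨ (j' : ℕ) = m i - 1 := by omega
        exact hend i j' this huS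
    · obtain ⟨j'', rfl, hj''⟩ := dist2_classify hnone hend hdu huS
      have hlt : (j'' : ℕ) < m i := j''.isLt
      have e1 : ((⟨1, h1⟩ : Fin (m i)) : ℕ) = 1 := rfl
      omega


lemma force_one (i : Fin k) (h4 : 4 ≤ m i) (h1 : (1 : ℕ) < m i) :
    some ⟨i, ⟨1, h1⟩⟩ ∈ S := by
  have h0 : (0 : ℕ) < m i := by omega
  have e0 : ((⟨0, h0⟩ : Fin (m i)) : ℕ) = 0 := rfl
  have e1 : ((⟨1, h1⟩ : Fin (m i)) : ℕ) = 1 := rfl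
  rcases hS (some ⟨i, ⟨0, h0⟩⟩) with ⟨u, huS, hadj⟩ | ⟨u, huS, w, hwS, hneuw, hdu, hdw⟩
  · rcases daisy_nbr_some hadj with ⟨rfl, -⟩ | ⟨j', rfl, hj'⟩
    · exact absurd huS hnone
    · have : j' = ⟨1, h1⟩ := Fin.ext (by omega)
      rwa [this] at huS
  · exfalso
    obtain ⟨ju, rfl, hju⟩ := dist2_classify hnone hend hdu huS
    obtain ⟨jw, rfl, hjw⟩ := dist2_classify hnone hend hdw hwS
    have : ju = jw := Fin.ext (by omega)
    subst this
    exact hneuw rfl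

lemma force_two (i : Fin k) (h4 : 4 ≤ m i) (h2 : (2 : ℕ) < m i) :
    some ⟨i, ⟨2, h2⟩⟩ ∈ S := by
  have h1 : (1 : ℕ) < m i := by omega
  have e1 : ((⟨1, h1⟩ : Fin (m i)) : ℕ) = 1 := rfl
  rcases hS (some ⟨i, ⟨1, h1⟩⟩) with ⟨u, huS, hadj⟩ | ⟨u, huS, w, hwS, hneuw, hdu, hdw⟩
  · rcases daisy_nbr_some hadj with ⟨rfl, hc⟩ | ⟨j', rfl, hj'⟩
    · exact absurd huS hnone
    · have hlt := j'.isLt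
      have : (j' : ℕ) = 2 ∨ (j' : ℕ) = 0 := by omega
      rcases this with h | h
      · have : j' = ⟨2, h2⟩ := Fin.ext h
        rwa [this] at huS
      · exact absurd huS (hend i j' (Or.inl h))
  · exfalso
    obtain ⟨ju, rfl, hju⟩ := dist2_classify hnone hend hdu huS
    obtain ⟨jw, rfl, hjw⟩ := dist2_classify hnone hend hdw hwS
    have : ju = jw := Fin.ext (by omega)
    subst this
    exact hneuw rfl

lemma force_sub_two (i : Fin k) (h4 : 4 ≤ m i) (hs2 : m i - 2 < m i) :
    some ⟨i, ⟨m i - 2, hs2⟩⟩ ∈ S := by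
  have hs1 : m i - 1 < m i := by omega
  have e1 : ((⟨m i - 1, hs1⟩ : Fin (m i)) : ℕ) = m i - 1 := rfl
  have e2 : ((⟨m i - 2, hs2⟩ : Fin (m i)) : ℕ) = m i - 2 := rfl
  rcases hS (some ⟨i, ⟨m i - 1, hs1⟩⟩) with ⟨u, huS, hadj⟩ | ⟨u, huS, w, hwS, hneuw, hdu, hdw⟩
  · rcases daisy_nbr_some hadj with ⟨rfl, hc⟩ | ⟨j', rfl, hj'⟩
    · exact absurd huS hnone
    · have hlt := j'.isLt
      have : j' = ⟨m i - 2, hs2⟩ := Fin.ext (by omega)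
      rwa [this] at huS
  · exfalso
    obtain ⟨ju, rfl, hju⟩ := dist2_classify hnone hend hdu huS
    obtain ⟨jw, rfl, hjw⟩ := dist2_classify hnone hend hdw hwS
    have hltu := ju.isLt
    have hltw := jw.isLt
    have : ju = jw := Fin.ext (by omega)
    subst this
    exact hneuw rfl

lemma force_sub_three (i : Fin k) (h4 : 4 ≤ m i) (hs3 : m i - 3 < m i) :
    some ⟨i, ⟨m i - 3, hs3⟩⟩ ∈ S := by
  have hs2 : m i - 2 < m i := by omega
  have e2 : ((⟨m i - 2, hs2⟩ : Fin (m i)) : ℕ) = m i - 2 := rfl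
  rcases hS (some ⟨i, ⟨m i - 2, hs2⟩⟩) with ⟨u, huS, hadj⟩ | ⟨u, huS, w, hwS, hneuw, hdu, hdw⟩
  · rcases daisy_nbr_some hadj with ⟨rfl, hc⟩ | ⟨j', rfl, hj'⟩
    · omega
    · have hlt := j'.isLt
      have : (j' : ℕ) = m i - 1 ∨ (j' : ℕ) = m i - 3 := by omega
      rcases this with h | h
      · exact absurd huS (hend i j' (Or.inr h))
      · have : j' = ⟨m i - 3, hs3⟩ := Fin.ext h
        rwa [this] at huS
  · exfalso
    obtain ⟨ju, rfl, hju⟩ := dist2_classify hnone hend hdu huS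
    obtain ⟨jw, rfl, hjw⟩ := dist2_classify hnone hend hdw hwS
    have hltu := ju.isLt
    have hltw := jw.isLt
    have : ju = jw := Fin.ext (by omega)
    subst this
    exact hneuw rfl

end Forcing

section Shift

variable {S : Finset (Option ((i : Fin k) × Fin (m i)))}

lemma some_mk_inj {i i' : Fin k} {j : Fin (m i)} {j' : Fin (m i')}
    (h : (some ⟨i, j⟩ : Option ((i : Fin k) × Fin (m i))) = some ⟨i', j'⟩) :
    i = i' ∧ (j : ℕ) = (j' : ℕ) := by
  obtain ⟨h1, h2⟩ := Sigma.mk.inj_iff.mp (Option.some_injective _ h)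
  subst h1
  exact ⟨rfl, congrArg Fin.val (eq_of_heq h2)⟩

lemma some_mk_congr {i : Fin k} {j j' : Fin (m i)} (h : (j : ℕ) = (j' : ℕ)) :
    (some ⟨i, j⟩ : Option ((i : Fin k) × Fin (m i))) = some ⟨i, j'⟩ := by
  rw [Fin.ext h]

/-- Shift the vertices of petal `a` one step towards the centre; fix everything else. -/
def shiftMap (k : ℕ) (m : Fin k → ℕ) (a : Fin k) :
    Option ((i : Fin k) × Fin (m i)) → Option ((i : Fin k) × Fin (m i))
  | none => none
  | some ⟨i, j⟩ =>
    if h : i = a then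
      some ⟨a, ⟨(j : ℕ) - 1, by subst h; exact lt_of_le_of_lt (Nat.sub_le _ _) j.isLt⟩⟩
    else some ⟨i, j⟩

lemma shiftMap_none (a : Fin k) : shiftMap k m a none = none := rfl

lemma shiftMap_some_a (a : Fin k) (j : Fin (m a)) :
    shiftMap k m a (some ⟨a, j⟩) =
      some ⟨a, ⟨(j : ℕ) - 1, lt_of_le_of_lt (Nat.sub_le _ _) j.isLt⟩⟩ := by
  simp [shiftMap]

lemma shiftMap_some_other {a i : Fin k} (hia : i ≠ a) (j : Fin (m i)) :
    shiftMap k m a (some ⟨i, j⟩) = some ⟨i, j⟩ := by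
  simp [shiftMap, hia]

lemma shift_none_not_mem (a : Fin k) (hnone : none ∉ S) :
    none ∉ S.image (shiftMap k m a) := by
  intro h
  obtain ⟨x, hxS, hx⟩ := Finset.mem_image.mp h
  match x with
  | none => exact hnone hxS
  | some ⟨i, j⟩ =>
    by_cases hia : i = a
    · subst hia; rw [shiftMap_some_a] at hx; exact Option.some_ne_none _ hx
    · rw [shiftMap_some_other hia] at hx; exact Option.some_ne_none _ hx

lemma shift_mem_other (a : Fin k) {b : Fin k} (hba : b ≠ a) (j : Fin (m b)) :
    some ⟨b, j⟩ ∈ S.image (shiftMap k m a) ↔ some ⟨b, j⟩ ∈ S := by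
  constructor
  · intro h
    obtain ⟨x, hxS, hx⟩ := Finset.mem_image.mp h
    match x with
    | none => exact absurd hx.symm (Option.some_ne_none _)
    | some ⟨i, j'⟩ =>
      by_cases hia : i = a
      · subst hia
        rw [shiftMap_some_a] at hx
        exact absurd (some_mk_inj hx).1.symm hba
      · rw [shiftMap_some_other hia] at hx
        rwa [hx] at hxS
  · intro h
    exact Finset.mem_image.mpr ⟨some ⟨b, j⟩, h, shiftMap_some_other hba j⟩

lemma shift_mem_a (a : Fin k)
    (hend : ∀ (i : Fin k) (jj : Fin (m i)), ((jj : ℕ) = 0 ∨ (jj : ℕ) = m i - 1) →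
      some ⟨i, jj⟩ ∉ S)
    (t : ℕ) (ht : t < m a) :
    some ⟨a, ⟨t, ht⟩⟩ ∈ S.image (shiftMap k m a) ↔
      ∃ h : t + 1 < m a, some ⟨a, ⟨t + 1, h⟩⟩ ∈ S := by
  constructor
  · intro h
    obtain ⟨x, hxS, hx⟩ := Finset.mem_image.mp h
    match x with
    | none => exact absurd hx.symm (Option.some_ne_none _)
    | some ⟨i, j'⟩ =>
      by_cases hia : i = a
      · subst hia
        rw [shiftMap_some_a] at hx
        have hval : (j' : ℕ) - 1 = t := (some_mk_inj hx).2
        have hj0 : (j' : ℕ) ≠ 0 := fun h0 => hend _ j' (Or.inl h0) hxS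
        have hlt := j'.isLt
        refine ⟨by omega, ?_⟩
        have heq : (some ⟨i, ⟨t + 1, by omega⟩⟩ : Option ((i : Fin k) × Fin (m i))) =
            some ⟨i, j'⟩ := some_mk_congr (show t + 1 = (j' : ℕ) by omega)
        rw [heq]
        exact hxS
      · rw [shiftMap_some_other hia] at hx
        exact absurd (some_mk_inj hx).1 hia
  · rintro ⟨hb, hmem⟩
    refine Finset.mem_image.mpr ⟨some ⟨a, ⟨t + 1, hb⟩⟩, hmem, ?_⟩
    rw [shiftMap_some_a]
    exact some_mk_congr (show t + 1 - 1 = t by omega)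

lemma shift_injOn (a : Fin k) (hnone : none ∉ S)
    (hend : ∀ (i : Fin k) (jj : Fin (m i)), ((jj : ℕ) = 0 ∨ (jj : ℕ) = m i - 1) →
      some ⟨i, jj⟩ ∉ S) :
    Set.InjOn (shiftMap k m a) S := by
  intro x hxS y hyS hxy
  match x, y with
  | none, _ => exact absurd hxS hnone
  | some _, none => exact absurd hyS hnone
  | some ⟨i, j⟩, some ⟨i', j'⟩ =>
    by_cases hia : i = a <;> by_cases hia' : i' = a
    · subst hia; subst hia'
      rw [shiftMap_some_a, shiftMap_some_a] at hxy
      have hval : (j : ℕ) - 1 = (j' : ℕ) - 1 := (some_mk_inj hxy).2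
      have hj0 : (j : ℕ) ≠ 0 := fun h0 => hend _ j (Or.inl h0) hxS
      have hj0' : (j' : ℕ) ≠ 0 := fun h0 => hend _ j' (Or.inl h0) hyS
      exact some_mk_congr (by omega)
    · subst hia
      rw [shiftMap_some_a, shiftMap_some_other hia'] at hxy
      exact absurd (some_mk_inj hxy).1.symm hia'
    · subst hia'
      rw [shiftMap_some_a, shiftMap_some_other hia] at hxy
      exact absurd (some_mk_inj hxy).1 hia
    · rwa [shiftMap_some_other hia, shiftMap_some_other hia'] at hxy

end Shift

lemma univ_dtd (hk : 1 ≤ k) (hm : ∀ i, 2 ≤ m i) :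
    IsDTDSet (daisy k m) Finset.univ := by
  intro x
  left
  match x with
  | none =>
    have hk0 : 0 < k := hk
    have h0 : 0 < m ⟨0, hk0⟩ := by have := hm ⟨0, hk0⟩; omega
    exact ⟨some ⟨⟨0, hk0⟩, ⟨0, h0⟩⟩, Finset.mem_univ _,
      daisy_adj_none_some.mpr (Or.inl rfl)⟩
  | some ⟨i, j⟩ =>
    by_cases hj : (j : ℕ) = 0
    · exact ⟨none, Finset.mem_univ _, (daisy_adj_none_some.mpr (Or.inl hj)).symm⟩
    · have hlt := j.isLt
      exact ⟨some ⟨i, ⟨(j : ℕ) - 1, by omega⟩⟩, Finset.mem_univ _,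
        daisy_adj_some_some.mpr (Or.inr (show (j : ℕ) - 1 + 1 = (j : ℕ) by omega))⟩

/-- If no minimum DTD-set of a daisy contains the central vertex v, then some
minimum DTD-set totally dominates v. -/
theorem daisy_center_totally_dominated (k : ℕ) (hk : 2 ≤ k) (m : Fin k → ℕ)
    (hm : ∀ i, 2 ≤ m i)
    (hv : ∀ S : Finset (Option ((i : Fin k) × Fin (m i))),
      IsDTDSet (daisy k m) S → S.card = dtdNum (daisy k m) → none ∉ S) :
    ∃ S : Finset (Option ((i : Fin k) × Fin (m i))),
      IsDTDSet (daisy k m) S ∧ S.card = dtdNum (daisy k m) ∧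
        ∃ u ∈ S, (daisy k m).Adj none u := by
  classical
  have hne : {n | ∃ S : Finset (Option ((i : Fin k) × Fin (m i))),
      IsDTDSet (daisy k m) S ∧ S.card = n}.Nonempty :=
    ⟨(Finset.univ : Finset (Option ((i : Fin k) × Fin (m i)))).card,
      Finset.univ, univ_dtd (by omega) hm, rfl⟩
  obtain ⟨S, hS, hcard⟩ :
      ∃ S : Finset (Option ((i : Fin k) × Fin (m i))),
        IsDTDSet (daisy k m) S ∧ S.card = dtdNum (daisy k m) :=
    Nat.sInf_mem hne
  by_cases hnb : ∃ u ∈ S, (daisy k m).Adj none u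
  · exact ⟨S, hS, hcard, hnb⟩
  have hnone : none ∉ S := hv S hS hcard
  have hend : ∀ (i : Fin k) (jj : Fin (m i)), ((jj : ℕ) = 0 ∨ (jj : ℕ) = m i - 1) →
      some ⟨i, jj⟩ ∉ S := by
    intro i jj hc hmem'
    exact hnb ⟨some ⟨i, jj⟩, hmem', daisy_adj_none_some.mpr hc⟩
  have h4 : ∀ i, 4 ≤ m i := daisy_m_ge_four hS hnone hend hm
  set a : Fin k := ⟨0, by omega⟩ with ha
  set S' := S.image (shiftMap k m a) with hS'def
  have hcard' : S'.card = S.card :=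
    Finset.card_image_of_injOn (shift_injOn a hnone hend)
  have h4a : 4 ≤ m a := h4 a
  have hm0 : (0 : ℕ) < m a := by omega
  have hmem0 : some ⟨a, ⟨0, hm0⟩⟩ ∈ S' :=
    (shift_mem_a a hend 0 hm0).mpr ⟨by omega, force_one hS hnone hend a h4a (by omega)⟩
  -- membership of the shifted "m-3" vertex
  have hmemM3 : some ⟨a, ⟨m a - 3, by omega⟩⟩ ∈ S' := by
    refine (shift_mem_a a hend (m a - 3) (by omega)).mpr ⟨by omega, ?_⟩
    have heq : (some ⟨a, ⟨m a - 3 + 1, by omega⟩⟩ : Option ((i : Fin k) × Fin (m i))) =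
        some ⟨a, ⟨m a - 2, by omega⟩⟩ := some_mk_congr (show m a - 3 + 1 = m a - 2 by omega)
    rw [heq]
    exact force_sub_two hS hnone hend a h4a (by omega)
  have hdtd' : IsDTDSet (daisy k m) S' := by
    intro x
    obtain _ | ⟨b, j⟩ := x
    · -- the centre
      exact Or.inl ⟨some ⟨a, ⟨0, hm0⟩⟩, hmem0, daisy_adj_none_some.mpr (Or.inl rfl)⟩
    by_cases hba : b = a
    case neg =>
      -- other petals : the old witnesses survive untouched
      rcases hS (some ⟨b, j⟩) with ⟨u, huS, hadj⟩ | ⟨u, huS, w, hwS, hneuw, hdu, hdw⟩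
      · rcases daisy_nbr_some hadj with ⟨rfl, -⟩ | ⟨j', rfl, hj'⟩
        · exact absurd huS hnone
        · exact Or.inl ⟨_, (shift_mem_other a hba j').mpr huS, hadj⟩
      · obtain ⟨ju, rfl, hju⟩ := dist2_classify hnone hend hdu huS
        obtain ⟨jw, rfl, hjw⟩ := dist2_classify hnone hend hdw hwS
        exact Or.inr ⟨_, (shift_mem_other a hba ju).mpr huS, _,
          (shift_mem_other a hba jw).mpr hwS, hneuw, hdu, hdw⟩
    case pos =>
      subst hba
      obtain ⟨jv, hjlt⟩ := j
      have hcases : jv = 0 ∨ jv = 1 ∨ (2 ≤ jv ∧ jv ≤ m a - 3) ∨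
          jv = m a - 2 ∨ jv = m a - 1 := by omega
      rcases hcases with h0 | h1 | ⟨hge, hle⟩ | hn2 | hn1
      · -- j = 0 : totally dominated by the (shifted) vertex 1
        subst h0
        refine Or.inl ⟨some ⟨a, ⟨1, by omega⟩⟩, ?_, ?_⟩
        · exact (shift_mem_a a hend 1 (by omega)).mpr
            ⟨by omega, force_two hS hnone hend a h4a (by omega)⟩
        · exact daisy_adj_some_some.mpr (Or.inl rfl)
      · -- j = 1 : totally dominated by vertex 0
        subst h1
        exact Or.inl ⟨some ⟨a, ⟨0, hm0⟩⟩, hmem0,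
          daisy_adj_some_some.mpr (Or.inr rfl)⟩
      · -- interior 2 ≤ jv ≤ m a - 3 : transfer old domination of jv+1
        rcases hS (some ⟨a, ⟨jv + 1, by omega⟩⟩) with
          ⟨u, huS, hadj⟩ | ⟨u, huS, w, hwS, hneuw, hdu, hdw⟩
        · rcases daisy_nbr_some hadj with ⟨rfl, -⟩ | ⟨j', rfl, hj'⟩
          · exact absurd huS hnone
          · have hj'2 : jv + 1 + 1 = (j' : ℕ) ∨ (j' : ℕ) + 1 = jv + 1 := hj'
            have hlt' := j'.isLt
            rcases hj'2 with hA | hB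
            · -- u is vertex jv+2 : shifted vertex jv+1 totally dominates
              refine Or.inl ⟨some ⟨a, ⟨jv + 1, by omega⟩⟩, ?_, ?_⟩
              · refine (shift_mem_a a hend (jv + 1) (by omega)).mpr ⟨by omega, ?_⟩
                have heq : (some ⟨a, ⟨jv + 1 + 1, by omega⟩⟩ :
                    Option ((i : Fin k) × Fin (m i))) = some ⟨a, j'⟩ :=
                  some_mk_congr (show jv + 1 + 1 = (j' : ℕ) by omega)
                rw [heq]; exact huS
              · exact daisy_adj_some_some.mpr (Or.inl rfl)
            · -- u is vertex jv : shifted vertex jv-1 totally dominates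
              refine Or.inl ⟨some ⟨a, ⟨jv - 1, by omega⟩⟩, ?_, ?_⟩
              · refine (shift_mem_a a hend (jv - 1) (by omega)).mpr ⟨by omega, ?_⟩
                have heq : (some ⟨a, ⟨jv - 1 + 1, by omega⟩⟩ :
                    Option ((i : Fin k) × Fin (m i))) = some ⟨a, j'⟩ :=
                  some_mk_congr (show jv - 1 + 1 = (j' : ℕ) by omega)
                rw [heq]; exact huS
              · exact daisy_adj_some_some.mpr (Or.inr (show jv - 1 + 1 = jv by omega))
        · -- pair case : old witnesses of jv+1 are jv+3 and jv-1
          obtain ⟨ju, rfl, hju⟩ := dist2_classify hnone hend hdu huS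
          obtain ⟨jw, rfl, hjw⟩ := dist2_classify hnone hend hdw hwS
          have hju2 : jv + 1 + 2 = (ju : ℕ) ∨ (ju : ℕ) + 2 = jv + 1 := hju
          have hjw2 : jv + 1 + 2 = (jw : ℕ) ∨ (jw : ℕ) + 2 = jv + 1 := hjw
          have hjune : (ju : ℕ) ≠ (jw : ℕ) := fun hcc => hneuw (some_mk_congr hcc)
          have hjult := ju.isLt
          have hjwlt := jw.isLt
          have hmain : ∃ h3 : jv + 3 < m a,
              some ⟨a, ⟨jv + 3, h3⟩⟩ ∈ S ∧ some ⟨a, ⟨jv - 1, by omega⟩⟩ ∈ S := by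
            rcases hju2 with hA | hB <;> rcases hjw2 with hC | hD
            · omega
            · refine ⟨by omega, ?_, ?_⟩
              · have heq : (some ⟨a, ⟨jv + 3, by omega⟩⟩ :
                    Option ((i : Fin k) × Fin (m i))) = some ⟨a, ju⟩ :=
                  some_mk_congr (show jv + 3 = (ju : ℕ) by omega)
                rw [heq]; exact huS
              · have heq : (some ⟨a, ⟨jv - 1, by omega⟩⟩ :
                    Option ((i : Fin k) × Fin (m i))) = some ⟨a, jw⟩ :=
                  some_mk_congr (show jv - 1 = (jw : ℕ) by omega)
                rw [heq]; exact hwS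
            · refine ⟨by omega, ?_, ?_⟩
              · have heq : (some ⟨a, ⟨jv + 3, by omega⟩⟩ :
                    Option ((i : Fin k) × Fin (m i))) = some ⟨a, jw⟩ :=
                  some_mk_congr (show jv + 3 = (jw : ℕ) by omega)
                rw [heq]; exact hwS
              · have heq : (some ⟨a, ⟨jv - 1, by omega⟩⟩ :
                    Option ((i : Fin k) × Fin (m i))) = some ⟨a, ju⟩ :=
                  some_mk_congr (show jv - 1 = (ju : ℕ) by omega)
                rw [heq]; exact huS
            · omega
          obtain ⟨h3, hmem3, hmem1⟩ := hmain
          refine Or.inr ⟨some ⟨a, ⟨jv + 2, by omega⟩⟩, ?_,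
            some ⟨a, ⟨jv - 2, by omega⟩⟩, ?_, ?_, ?_, ?_⟩
          · exact (shift_mem_a a hend (jv + 2) (by omega)).mpr ⟨by omega, hmem3⟩
          · refine (shift_mem_a a hend (jv - 2) (by omega)).mpr ⟨by omega, ?_⟩
            have heq : (some ⟨a, ⟨jv - 2 + 1, by omega⟩⟩ :
                Option ((i : Fin k) × Fin (m i))) = some ⟨a, ⟨jv - 1, by omega⟩⟩ :=
              some_mk_congr (show jv - 2 + 1 = jv - 1 by omega)
            rw [heq]; exact hmem1
          · intro hcc
            have : jv + 2 = jv - 2 := (some_mk_inj hcc).2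
            omega
          · refine dist_eq_two (z := some ⟨a, ⟨jv + 1, by omega⟩⟩)
              (daisy_adj_some_some.mpr (Or.inl rfl))
              (daisy_adj_some_some.mpr (Or.inl rfl)) ?_ ?_
            · intro hcc
              have : jv = jv + 2 := (some_mk_inj hcc).2
              omega
            · intro hadj
              have hc2 : jv + 1 = jv + 2 ∨ jv + 2 + 1 = jv := daisy_adj_some_some.mp hadj
              omega
          · refine dist_eq_two (z := some ⟨a, ⟨jv - 1, by omega⟩⟩)
              (daisy_adj_some_some.mpr (Or.inr (show jv - 1 + 1 = jv by omega)))
              (daisy_adj_some_some.mpr (Or.inr (show jv - 2 + 1 = jv - 1 by omega))) ?_ ?_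
            · intro hcc
              have : jv = jv - 2 := (some_mk_inj hcc).2
              omega
            · intro hadj
              have hc2 : jv + 1 = jv - 2 ∨ jv - 2 + 1 = jv := daisy_adj_some_some.mp hadj
              omega
      · -- j = m a - 2 : totally dominated by shifted vertex m a - 3
        subst hn2
        refine Or.inl ⟨some ⟨a, ⟨m a - 3, by omega⟩⟩, hmemM3,
          daisy_adj_some_some.mpr (Or.inr (show m a - 3 + 1 = m a - 2 by omega))⟩
      · -- j = m a - 1 : two witnesses at distance two, vertices 0 and m a - 3
        subst hn1
        refine Or.inr ⟨some ⟨a, ⟨0, hm0⟩⟩, hmem0,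
          some ⟨a, ⟨m a - 3, by omega⟩⟩, hmemM3, ?_, ?_, ?_⟩
        · intro hcc
          have : (0 : ℕ) = m a - 3 := (some_mk_inj hcc).2
          omega
        · refine dist_eq_two (z := (none : Option ((i : Fin k) × Fin (m i))))
            ((daisy_adj_none_some.mpr (Or.inr rfl)).symm)
            (daisy_adj_none_some.mpr (Or.inl rfl)) ?_ ?_
          · intro hcc
            have : m a - 1 = 0 := (some_mk_inj hcc).2
            omega
          · intro hadj
            have hc2 : m a - 1 + 1 = 0 ∨ 0 + 1 = m a - 1 := daisy_adj_some_some.mp hadj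
            omega
        · refine dist_eq_two (z := some ⟨a, ⟨m a - 2, by omega⟩⟩)
            (daisy_adj_some_some.mpr (Or.inr (show m a - 2 + 1 = m a - 1 by omega)))
            (daisy_adj_some_some.mpr (Or.inr (show m a - 3 + 1 = m a - 2 by omega))) ?_ ?_
          · intro hcc
            have : m a - 1 = m a - 3 := (some_mk_inj hcc).2
            omega
          · intro hadj
            have hc2 : m a - 1 + 1 = m a - 3 ∨ m a - 3 + 1 = m a - 1 :=
              daisy_adj_some_some.mp hadj
            omega
  exact ⟨S', hdtd', by rw [hcard', hcard], some ⟨a, ⟨0, hm0⟩⟩, hmem0,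
    daisy_adj_none_some.mpr (Or.inl rfl)⟩
end

section
/- If G is a connected graph of order n ≥ 8, then γ_t^d(G) ≤ 2(n−1)/3. -/
set_option linter.unusedSectionVars false

open SimpleGraph

namespace DTD

open Finset
open scoped Classical

variable {V : Type*} {G : SimpleGraph V} {S T : Finset V} {u v w x : V}

def near2 (G : SimpleGraph V) (v u : V) : Prop :=
  G.Adj v u ∨ ∃ x, G.Adj v x ∧ G.Adj x u

def CovAt (G : SimpleGraph V) (S : Finset V) (v : V) : Prop :=
  (∃ u ∈ S, G.Adj v u) ∨
    ∃ u ∈ S, ∃ w ∈ S, u ≠ w ∧ v ≠ u ∧ v ≠ w ∧ near2 G v u ∧ near2 G v w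

def Cov (G : SimpleGraph V) (S : Finset V) : Prop := ∀ v, CovAt G S v

lemma near2_of_adj (h : G.Adj v u) : near2 G v u := Or.inl h

lemma near2_of_mid (h1 : G.Adj v x) (h2 : G.Adj x u) : near2 G v u := Or.inr ⟨x, h1, h2⟩

lemma near2.dist_le (h : near2 G v u) : G.dist v u ≤ 2 := by
  rcases h with h | ⟨x, h1, h2⟩
  · exact le_trans (SimpleGraph.dist_le h.toWalk) (by simp)
  · exact le_trans (SimpleGraph.dist_le (Walk.cons h1 (Walk.cons h2 Walk.nil))) (by simp)

lemma near2_of_dist (hr : G.Reachable v u) (hne : v ≠ u) (h : G.dist v u ≤ 2) :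
    near2 G v u := by
  obtain ⟨p, hp⟩ := hr.exists_walk_length_eq_dist
  match p, hp with
  | Walk.nil, hp => exact absurd rfl hne
  | Walk.cons h1 Walk.nil, hp => exact near2_of_adj h1
  | Walk.cons h1 (Walk.cons h2 Walk.nil), hp => exact near2_of_mid h1 h2
  | Walk.cons h1 (Walk.cons h2 (Walk.cons h3 q)), hp => simp [SimpleGraph.Walk.length_cons] at hp; omega

lemma CovAt.mono (h : CovAt G S v) (hST : S ⊆ T) : CovAt G T v := by
  rcases h with ⟨u, hu, hadj⟩ | ⟨u, hu, w, hw, rest⟩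
  · exact Or.inl ⟨u, hST hu, hadj⟩
  · exact Or.inr ⟨u, hST hu, w, hST hw, rest⟩

lemma covAt_adj (hu : u ∈ S) (h : G.Adj v u) : CovAt G S v := Or.inl ⟨u, hu, h⟩

lemma covAt_pair (hu : u ∈ S) (hw : w ∈ S) (huw : u ≠ w) (hvu : v ≠ u) (hvw : v ≠ w)
    (h1 : near2 G v u) (h2 : near2 G v w) : CovAt G S v :=
  Or.inr ⟨u, hu, w, hw, huw, hvu, hvw, h1, h2⟩

lemma Cov.isDTDSet (h : Cov G S) (hc : G.Connected) : IsDTDSet G S := by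
  intro v
  rcases h v with ⟨u, hu, hadj⟩ | ⟨u, hu, w, hw, huw, hvu, hvw, h1, h2⟩
  · exact Or.inl ⟨u, hu, hadj⟩
  · by_cases a1 : G.Adj v u
    · exact Or.inl ⟨u, hu, a1⟩
    by_cases a2 : G.Adj v w
    · exact Or.inl ⟨w, hw, a2⟩
    refine Or.inr ⟨u, hu, w, hw, huw, ?_, ?_⟩
    · have hple := h1.dist_le
      have hpos := hc.pos_dist_of_ne hvu
      have hne1 : G.dist v u ≠ 1 := fun hh => a1 (SimpleGraph.dist_eq_one_iff_adj.mp hh)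
      omega
    · have hple := h2.dist_le
      have hpos := hc.pos_dist_of_ne hvw
      have hne1 : G.dist v w ≠ 1 := fun hh => a2 (SimpleGraph.dist_eq_one_iff_adj.mp hh)
      omega

def A : ℕ → ℕ := fun n => if n ≤ 4 then 6 else if n = 5 then 9 else if n = 6 then 12 else 2*n - 2

lemma A_ge6 (n : ℕ) : 6 ≤ A n := by
  unfold A; split_ifs <;> omega

lemma A_eq {n : ℕ} (h : 7 ≤ n) : A n = 2*n - 2 := by
  unfold A; split_ifs <;> omega

lemma near2_lift {R : Set V} {a b : ↥R} (h : near2 (G.induce R) a b) :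
    near2 G a.val b.val := by
  rcases h with h | ⟨x, h1, h2⟩
  · exact near2_of_adj h
  · exact near2_of_mid (x := x.val) h1 h2

lemma cov_lift {R : Set V} {S' : Finset ↥R} (h : Cov (G.induce R) S')
    {v : V} (hv : v ∈ R) : CovAt G (S'.image Subtype.val) v := by
  rcases h ⟨v, hv⟩ with ⟨u, hu, hadj⟩ | ⟨u, hu, w, hw, huw, hvu, hvw, h1, h2⟩
  · exact covAt_adj (mem_image_of_mem _ hu) hadj
  · refine covAt_pair (mem_image_of_mem _ hu) (mem_image_of_mem _ hw)
      (fun hh => huw (Subtype.ext hh)) (fun hh => hvu (Subtype.ext hh))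
      (fun hh => hvw (Subtype.ext hh)) (near2_lift h1) (near2_lift h2)



lemma exists_parent (hc : G.Connected) {r v : V} (h : v ≠ r) :
    ∃ u, G.Adj v u ∧ G.dist r u + 1 = G.dist r v := by
  obtain ⟨p, hp⟩ := (hc.preconnected v r).exists_walk_length_eq_dist
  match p, hp with
  | Walk.nil, hp => exact absurd rfl h
  | @Walk.cons _ _ _ b _ hadj q, hp =>
    refine ⟨b, hadj, ?_⟩
    have h1 : G.dist b r ≤ q.length := SimpleGraph.dist_le q
    have h2 : G.dist v r ≤ G.dist v b + G.dist b r := hc.dist_triangle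
    have h3 : G.dist v b ≤ 1 := by
      have := SimpleGraph.dist_le hadj.toWalk
      simpa using this
    have hlen : q.length + 1 = G.dist v r := by
      simpa [SimpleGraph.Walk.length_cons] using hp
    have e1 : G.dist r b = G.dist b r := SimpleGraph.dist_comm
    have e2 : G.dist r v = G.dist v r := SimpleGraph.dist_comm
    omega

structure Cut (G : SimpleGraph V) : Type _ where
  conn : G.Connected
  r : V
  u0 : V
  u1 : V
  u2 : V
  u3 : V
  P : V → V
  hPadj : ∀ v, v ≠ r → G.Adj v (P v)
  hPdist : ∀ v, v ≠ r → G.dist r (P v) + 1 = G.dist r v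
  hmax : ∀ a b : V, G.dist a b ≤ G.dist r u0
  hD : 3 ≤ G.dist r u0
  hu1 : u1 = P u0
  hu2 : u2 = P u1
  hu3 : u3 = P u2

namespace Cut

variable (c : Cut G)

lemma ne_r_of_dist (h : G.dist c.r v ≠ 0) : v ≠ c.r := by
  rintro rfl; simp [SimpleGraph.dist_self] at h

lemma dist_r_eq_zero (h : G.dist c.r v = 0) : v = c.r :=
  (c.conn.dist_eq_zero_iff.mp h).symm

lemma u0_ne_r : c.u0 ≠ c.r := c.ne_r_of_dist (by have := c.hD; omega)

lemma du1 : G.dist c.r c.u1 + 1 = G.dist c.r c.u0 := by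
  rw [c.hu1]; exact c.hPdist c.u0 c.u0_ne_r

lemma u1_ne_r : c.u1 ≠ c.r := c.ne_r_of_dist (by have := c.hD; have := c.du1; omega)

lemma du2 : G.dist c.r c.u2 + 1 = G.dist c.r c.u1 := by
  rw [c.hu2]; exact c.hPdist c.u1 c.u1_ne_r

lemma u2_ne_r : c.u2 ≠ c.r :=
  c.ne_r_of_dist (by have := c.hD; have := c.du1; have := c.du2; omega)

lemma du3 : G.dist c.r c.u3 + 1 = G.dist c.r c.u2 := by
  rw [c.hu3]; exact c.hPdist c.u2 c.u2_ne_r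

lemma adj01 : G.Adj c.u0 c.u1 := by rw [c.hu1]; exact c.hPadj c.u0 c.u0_ne_r
lemma adj12 : G.Adj c.u1 c.u2 := by rw [c.hu2]; exact c.hPadj c.u1 c.u1_ne_r
lemma adj23 : G.Adj c.u2 c.u3 := by rw [c.hu3]; exact c.hPadj c.u2 c.u2_ne_r

variable [Fintype V]

noncomputable def C : Finset V := univ.filter (fun v => v ≠ c.r ∧ c.P v = c.u2)
noncomputable def GC : Finset V := univ.filter (fun v => v ≠ c.r ∧ c.P v ∈ c.C)
noncomputable def C' : Finset V := c.GC.image c.P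
noncomputable def B : Finset V := insert c.u2 (c.C ∪ c.GC)
noncomputable def R : Finset V := univ \ c.B

lemma mem_C {v : V} : v ∈ c.C ↔ v ≠ c.r ∧ c.P v = c.u2 := by simp [C]
lemma mem_GC {v : V} : v ∈ c.GC ↔ v ≠ c.r ∧ c.P v ∈ c.C := by simp [GC]
lemma mem_B {v : V} : v ∈ c.B ↔ v = c.u2 ∨ v ∈ c.C ∨ v ∈ c.GC := by simp [B]
lemma mem_R {v : V} : v ∈ c.R ↔ v ∉ c.B := by simp [R]

lemma dist_of_mem_C (h : v ∈ c.C) : G.dist c.r v = G.dist c.r c.u2 + 1 := by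
  rw [c.mem_C] at h
  have := c.hPdist v h.1
  rw [h.2] at this; omega

lemma dist_of_mem_GC (h : v ∈ c.GC) : G.dist c.r v = G.dist c.r c.u2 + 2 := by
  rw [c.mem_GC] at h
  have h2 := c.hPdist v h.1
  have := c.dist_of_mem_C h.2
  omega

lemma adj_of_mem_C (h : v ∈ c.C) : G.Adj v c.u2 := by
  rw [c.mem_C] at h
  have := c.hPadj v h.1
  rwa [h.2] at this

lemma adj_of_mem_GC (h : v ∈ c.GC) : G.Adj v (c.P v) ∧ c.P v ∈ c.C' := by
  rw [c.mem_GC] at h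
  exact ⟨c.hPadj v h.1, mem_image_of_mem _ (c.mem_GC.mpr h)⟩

lemma u1_mem_C : c.u1 ∈ c.C := c.mem_C.mpr ⟨c.u1_ne_r, c.hu2.symm⟩
lemma u0_mem_GC : c.u0 ∈ c.GC := c.mem_GC.mpr ⟨c.u0_ne_r, by rw [← c.hu1]; exact c.u1_mem_C⟩
lemma u1_mem_C' : c.u1 ∈ c.C' := by
  have : c.P c.u0 ∈ c.C' := mem_image_of_mem _ c.u0_mem_GC
  rwa [← c.hu1] at this

lemma C'_subset_C : c.C' ⊆ c.C := by
  intro x hx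
  obtain ⟨g, hg, rfl⟩ := mem_image.mp hx
  exact (c.mem_GC.mp hg).2

lemma dist_of_mem_C' (h : v ∈ c.C') : G.dist c.r v = G.dist c.r c.u2 + 1 :=
  c.dist_of_mem_C (c.C'_subset_C h)

lemma u2_notMem_C : c.u2 ∉ c.C := fun h => by have := c.dist_of_mem_C h; omega
lemma u2_notMem_GC : c.u2 ∉ c.GC := fun h => by have := c.dist_of_mem_GC h; omega

lemma disj_C_GC : Disjoint c.C c.GC := by
  rw [Finset.disjoint_left]
  intro a h1 h2
  have := c.dist_of_mem_C h1; have := c.dist_of_mem_GC h2; omega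

lemma card_B : c.B.card = 1 + c.C.card + c.GC.card := by
  rw [B, card_insert_of_notMem (by simp [c.u2_notMem_C, c.u2_notMem_GC]),
    card_union_of_disjoint c.disj_C_GC]
  omega

lemma u3_dist : G.dist c.r c.u3 + 3 = G.dist c.r c.u0 := by
  have := c.du1; have := c.du2; have := c.du3; omega

lemma u3_notMem_B : c.u3 ∉ c.B := by
  rw [c.mem_B]
  push_neg
  have h3 := c.du3
  refine ⟨fun h => by rw [h] at h3; omega, fun h => by have := c.dist_of_mem_C h; omega,
    fun h => by have := c.dist_of_mem_GC h; omega⟩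

lemma u3_mem_R : c.u3 ∈ c.R := c.mem_R.mpr c.u3_notMem_B

lemma r_notMem_B : c.r ∉ c.B := by
  rw [c.mem_B]
  push_neg
  refine ⟨fun h => c.u2_ne_r h.symm, fun h => (c.mem_C.mp h).1 rfl, fun h => (c.mem_GC.mp h).1 rfl⟩

lemma r_mem_R : c.r ∈ c.R := c.mem_R.mpr c.r_notMem_B

lemma dist_le_D (v : V) : G.dist c.r v ≤ G.dist c.r c.u0 := c.hmax c.r v

lemma card_split : Fintype.card V = c.B.card + c.R.card := by
  rw [R, card_sdiff_of_subset (subset_univ _), card_univ]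
  have : c.B.card ≤ Fintype.card V := by
    rw [← card_univ]; exact card_le_card (subset_univ _)
  omega

lemma closure {v : V} (hv : v ∈ c.R) (hvr : v ≠ c.r) : c.P v ∈ c.R := by
  rw [c.mem_R, c.mem_B]
  push_neg
  rw [c.mem_R, c.mem_B] at hv
  push_neg at hv
  refine ⟨fun h => hv.2.1 (c.mem_C.mpr ⟨hvr, h⟩), fun h => hv.2.2 (c.mem_GC.mpr ⟨hvr, h⟩), fun h => ?_⟩
  have h1 := c.dist_of_mem_GC h
  have h2 := c.hPdist v hvr
  have h3 := c.dist_le_D v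
  have h4 := c.du1
  have h5 := c.du2
  omega

lemma mem_R_of_dist_gt (h : G.dist c.r c.u2 + 2 < G.dist c.r v) : v ∈ c.R := by
  rw [c.mem_R, c.mem_B]
  push_neg
  refine ⟨fun hh => by rw [hh] at h; omega, fun hh => by have := c.dist_of_mem_C hh; omega,
    fun hh => by have := c.dist_of_mem_GC hh; omega⟩

end Cut

lemma induce_connected_of_closed (hc : G.Connected) {r : V} {P : V → V}
    (hPadj : ∀ v, v ≠ r → G.Adj v (P v))
    (hPdist : ∀ v, v ≠ r → G.dist r (P v) + 1 = G.dist r v)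
    {T : Finset V} (hr : r ∈ T) (hcl : ∀ v ∈ T, v ≠ r → P v ∈ T) :
    (G.induce (T : Set V)).Connected := by
  rw [connected_iff]
  constructor
  · have key : ∀ (k : ℕ) (v : V) (hv : v ∈ T), G.dist r v ≤ k →
        (G.induce (T : Set V)).Reachable ⟨v, by simpa using hv⟩ ⟨r, by simpa using hr⟩ := by
      intro k
      induction k with
      | zero =>
        intro v hv h0
        have hvr : r = v := hc.dist_eq_zero_iff.mp (by omega)
        subst hvr
        exact Reachable.refl _
      | succ k ih =>
        intro v hv hk
        by_cases hvr : v = r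
        · subst hvr; exact Reachable.refl _
        · have h1 := hPadj v hvr
          have h2 := hPdist v hvr
          have hPT := hcl v hv hvr
          have hadj : (G.induce (T : Set V)).Adj ⟨v, by simpa using hv⟩ ⟨P v, by simpa using hPT⟩ := by
            simpa using h1
          have hlt : G.dist r (P v) ≤ k := by
            have hpos : 0 < G.dist r v := hc.pos_dist_of_ne (fun h => hvr h.symm)
            omega
          exact hadj.reachable.trans (ih (P v) hPT hlt)
    intro a b
    have ha := key (G.dist r a.1) a.1 (by simpa using a.2) le_rfl
    have hb := key (G.dist r b.1) b.1 (by simpa using b.2) le_rfl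
    exact ha.trans hb.symm
  · exact ⟨⟨r, by simpa using hr⟩⟩

lemma exists_neighbor {W : Type*} {H : SimpleGraph W} (hc : H.Connected) {a b : W}
    (hne : a ≠ b) : ∃ x, H.Adj a x := by
  obtain ⟨p, _⟩ := (hc.preconnected a b).exists_walk_length_eq_dist
  match p with
  | Walk.nil => exact absurd rfl hne
  | Walk.cons hadj _ => exact ⟨_, hadj⟩

lemma exists_small_or_cut [Fintype V] (hc : G.Connected) (h2 : 2 ≤ Fintype.card V) :
    (∃ S : Finset V, S.card ≤ 2 ∧ Cov G S) ∨ Nonempty (Cut G) := by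
  have hne : Nonempty V := Fintype.card_pos_iff.mp (by omega)
  obtain ⟨⟨r, u0⟩, -, hmax⟩ := Finset.exists_max_image (univ ×ˢ univ)
    (fun q => G.dist q.1 q.2) ⟨(Classical.arbitrary V, Classical.arbitrary V), by simp⟩
  have hmax' : ∀ a b : V, G.dist a b ≤ G.dist r u0 := fun a b => hmax (a, b) (by simp)
  by_cases hD : 3 ≤ G.dist r u0
  · right
    set P : V → V := fun v => if h : v = r then v else Classical.choose (exists_parent hc h)
      with hPdef
    have hPadj : ∀ v, v ≠ r → G.Adj v (P v) := by
      intro v hv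
      simp only [hPdef, dif_neg hv]
      exact (Classical.choose_spec (exists_parent hc hv)).1
    have hPdist : ∀ v, v ≠ r → G.dist r (P v) + 1 = G.dist r v := by
      intro v hv
      simp only [hPdef, dif_neg hv]
      exact (Classical.choose_spec (exists_parent hc hv)).2
    exact ⟨⟨hc, r, u0, P u0, P (P u0), P (P (P u0)), P, hPadj, hPdist, hmax', hD,
      rfl, rfl, rfl⟩⟩
  · left
    obtain ⟨v0, hv0⟩ := Fintype.exists_ne_of_one_lt_card (by omega) r
    obtain ⟨cc, hcc⟩ := exists_neighbor hc (Ne.symm hv0)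
    refine ⟨{r, cc}, ?_, ?_⟩
    · exact le_trans (card_insert_le _ _) (by simp)
    · intro z
      by_cases hzr : z = r
      · exact covAt_adj (u := cc) (by simp) (by rwa [hzr])
      by_cases hzc : z = cc
      · exact covAt_adj (u := r) (by simp) (by rw [hzc]; exact hcc.symm)
      refine covAt_pair (u := r) (w := cc) (by simp) (by simp) hcc.ne hzr hzc ?_ ?_
      · exact near2_of_dist (hc.preconnected z r) hzr (le_trans (hmax' z r) (by omega))
      · exact near2_of_dist (hc.preconnected z cc) hzc (le_trans (hmax' z cc) (by omega))

namespace Cut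
variable [Fintype V] (c : Cut G)

lemma partition (v : V) : v ∈ c.B ∨ v ∈ c.R :=
  (em (v ∈ c.B)).imp id c.mem_R.mpr

lemma Rconn : (G.induce (c.R : Set V)).Connected :=
  induce_connected_of_closed c.conn c.hPadj c.hPdist c.r_mem_R (fun v hv => c.closure hv)

lemma ne_u3_of_mem_C (h : v ∈ c.C) : v ≠ c.u3 := by
  rintro rfl
  exact c.u3_notMem_B (c.mem_B.mpr (Or.inr (Or.inl h)))

lemma near2_u3_of_mem_C (h : v ∈ c.C) : near2 G v c.u3 :=
  near2_of_mid (c.adj_of_mem_C h) c.adj23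

lemma near2_of_mem_C_C (h : v ∈ c.C) (h' : w ∈ c.C) : near2 G v w :=
  near2_of_mid (c.adj_of_mem_C h) (c.adj_of_mem_C h').symm

lemma ne_of_mem_C_R (h : v ∈ c.C) (h' : w ∈ c.R) : v ≠ w := by
  rintro rfl
  exact (c.mem_R.mp h') (c.mem_B.mpr (Or.inr (Or.inl h)))

lemma ne_of_mem_GC_R (h : v ∈ c.GC) (h' : w ∈ c.R) : v ≠ w := by
  rintro rfl
  exact (c.mem_R.mp h') (c.mem_B.mpr (Or.inr (Or.inr h)))

lemma u2_ne_of_mem_R (h' : w ∈ c.R) : c.u2 ≠ w := by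
  rintro rfl
  exact (c.mem_R.mp h') (c.mem_B.mpr (Or.inl rfl))

-- coverage of the branch B by various kinds of sets
lemma covB_std {S : Finset V} (hu2S : c.u2 ∈ S) (hC'S : c.C' ⊆ S) :
    ∀ v ∈ c.B, CovAt G S v := by
  intro v hv
  rcases c.mem_B.mp hv with rfl | hv | hv
  · exact covAt_adj (hC'S c.u1_mem_C') c.adj12.symm
  · exact covAt_adj hu2S (c.adj_of_mem_C hv)
  · exact covAt_adj (hC'S (c.adj_of_mem_GC hv).2) (c.adj_of_mem_GC hv).1

lemma covB_u1u2 {S : Finset V} (hm' : c.C'.card = 1) (h1 : c.u1 ∈ S) (h2 : c.u2 ∈ S) :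
    ∀ v ∈ c.B, CovAt G S v := by
  have hC' : c.C' = {c.u1} := by
    obtain ⟨a, ha⟩ := card_eq_one.mp hm'
    rw [ha]
    congr 1
    have := c.u1_mem_C'
    rw [ha, mem_singleton] at this
    exact this.symm
  intro v hv
  rcases c.mem_B.mp hv with rfl | hv | hv
  · exact covAt_adj h1 c.adj12.symm
  · exact covAt_adj h2 (c.adj_of_mem_C hv)
  · have hPv : c.P v = c.u1 := by
      have := (c.adj_of_mem_GC hv).2
      rw [hC', mem_singleton] at this
      exact this
    exact covAt_adj h1 (by rw [← hPv]; exact (c.adj_of_mem_GC hv).1)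

lemma covB_C'only {S : Finset V} (hm' : 3 ≤ c.C'.card) (hC'S : c.C' ⊆ S) :
    ∀ v ∈ c.B, CovAt G S v := by
  intro v hv
  rcases c.mem_B.mp hv with rfl | hv | hv
  · exact covAt_adj (hC'S c.u1_mem_C') c.adj12.symm
  · have hcard : 2 ≤ (c.C'.erase v).card := by
      by_cases hvC : v ∈ c.C'
      · rw [card_erase_of_mem hvC]; omega
      · rw [erase_eq_of_notMem hvC]; omega
    obtain ⟨a, ha, b, hb, hab⟩ := one_lt_card.mp hcard
    have haC := c.C'_subset_C (mem_of_mem_erase ha)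
    have hbC := c.C'_subset_C (mem_of_mem_erase hb)
    exact covAt_pair (hC'S (mem_of_mem_erase ha)) (hC'S (mem_of_mem_erase hb)) hab
      (Ne.symm (ne_of_mem_erase ha)) (Ne.symm (ne_of_mem_erase hb))
      (c.near2_of_mem_C_C hv haC) (c.near2_of_mem_C_C hv hbC)
  · exact covAt_adj (hC'S (c.adj_of_mem_GC hv).2) (c.adj_of_mem_GC hv).1

lemma covB_noU2 {S : Finset V} (hm' : 2 ≤ c.C'.card) (hC'S : c.C' ⊆ S) (hu3 : c.u3 ∈ S) :
    ∀ v ∈ c.B, CovAt G S v := by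
  intro v hv
  rcases c.mem_B.mp hv with rfl | hv | hv
  · exact covAt_adj (hC'S c.u1_mem_C') c.adj12.symm
  · have hcard : 1 ≤ (c.C'.erase v).card := by
      have h1 : c.C'.card - 1 ≤ (c.C'.erase v).card := pred_card_le_card_erase
      omega
    obtain ⟨a, ha⟩ := card_pos.mp hcard
    have haC := c.C'_subset_C (mem_of_mem_erase ha)
    exact covAt_pair (hC'S (mem_of_mem_erase ha)) hu3 (c.ne_u3_of_mem_C haC)
      (Ne.symm (ne_of_mem_erase ha)) (c.ne_u3_of_mem_C hv)
      (c.near2_of_mem_C_C hv haC) (c.near2_u3_of_mem_C hv)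
  · exact covAt_adj (hC'S (c.adj_of_mem_GC hv).2) (c.adj_of_mem_GC hv).1

lemma one_le_C' : 1 ≤ c.C'.card := card_pos.mpr ⟨c.u1, c.u1_mem_C'⟩
lemma C'_le_C : c.C'.card ≤ c.C.card := card_le_card c.C'_subset_C
lemma C'_le_GC : c.C'.card ≤ c.GC.card := card_image_le

end Cut

namespace Cut
variable [Fintype V] (c : Cut G)

lemma ne_RB (hv : v ∈ c.R) (hw : w ∈ c.B) : v ≠ w := by
  rintro rfl; exact (c.mem_R.mp hv) hw

lemma u0_mem_B : c.u0 ∈ c.B := c.mem_B.mpr (Or.inr (Or.inr c.u0_mem_GC))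
lemma u1_mem_B : c.u1 ∈ c.B := c.mem_B.mpr (Or.inr (Or.inl c.u1_mem_C))
lemma u2_mem_B : c.u2 ∈ c.B := c.mem_B.mpr (Or.inl rfl)

lemma u0_ne_u1 : c.u0 ≠ c.u1 := by
  intro h
  have h1 := c.du1
  rw [← h] at h1; omega

lemma u0_ne_u2 : c.u0 ≠ c.u2 := by
  intro h
  have h1 := c.du1; have h2 := c.du2
  rw [← h] at h2; omega

lemma u1_ne_u2 : c.u1 ≠ c.u2 := by
  intro h
  have h2 := c.du2
  rw [← h] at h2; omega

lemma R_eq_of_card_one (h : c.R.card = 1) : c.R = {c.u3} := by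
  obtain ⟨a, ha⟩ := card_eq_one.mp h
  rw [ha]
  have := c.u3_mem_R
  rw [ha, mem_singleton] at this
  rw [this]

lemma cov_m1 (h : c.R.card = 1) : Cov G (insert c.u2 c.C') := by
  intro v
  rcases c.partition v with hv | hv
  · exact c.covB_std (mem_insert_self _ _) (subset_insert _ _) v hv
  · have : v = c.u3 := by
      have := c.R_eq_of_card_one h
      rw [this, mem_singleton] at hv
      exact hv
    subst this
    exact covAt_adj (mem_insert_self _ _) c.adj23.symm

lemma R_two (h : c.R.card = 2) : ∃ x, x ≠ c.u3 ∧ x ∈ c.R ∧ c.R = {c.u3, x} ∧ G.Adj c.u3 x := by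
  obtain ⟨a, b, hab, hR⟩ := card_eq_two.mp h
  have hu3 := c.u3_mem_R
  rw [hR, mem_insert, mem_singleton] at hu3
  obtain ⟨x, hxne, hxR⟩ : ∃ x, x ≠ c.u3 ∧ c.R = {c.u3, x} := by
    rcases hu3 with rfl | rfl
    · exact ⟨b, fun hh => hab hh.symm, hR⟩
    · exact ⟨a, hab, by rw [hR, pair_comm]⟩
  have hxmem : x ∈ c.R := by rw [hxR]; simp
  have hconn := c.Rconn
  have hne : (⟨c.u3, by simpa using c.u3_mem_R⟩ : ↥(c.R : Set V)) ≠ ⟨x, by simpa using hxmem⟩ :=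
    fun hh => hxne (congrArg Subtype.val hh).symm
  obtain ⟨⟨w, hwmem'⟩, hbb⟩ := exists_neighbor hconn hne
  have hwmem : w ∈ c.R := by simpa using hwmem'
  have hadj : G.Adj c.u3 w := hbb
  have hbbne : w ≠ c.u3 := fun hh => G.irrefl (hh ▸ hadj.symm)
  have hwx : w = x := by
    rw [hxR, mem_insert, mem_singleton] at hwmem
    tauto
  exact ⟨x, hxne, hxmem, hxR, hwx ▸ hadj⟩

lemma cov_m2 (h : c.R.card = 2) : Cov G (insert c.u2 (insert c.u3 c.C')) := by
  obtain ⟨x, hxne, hxmem, hxR, hadj⟩ := c.R_two h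
  intro v
  rcases c.partition v with hv | hv
  · refine c.covB_std (mem_insert_self _ _) ?_ v hv
    intro y hy
    exact mem_insert_of_mem (mem_insert_of_mem hy)
  · rw [hxR, mem_insert, mem_singleton] at hv
    rcases hv with rfl | rfl
    · exact covAt_adj (mem_insert_self _ _) c.adj23.symm
    · exact covAt_adj (mem_insert_of_mem (mem_insert_self _ _)) hadj.symm

lemma R_three (h : c.R.card = 3) :
    ∃ x y, x ∈ c.R ∧ y ∈ c.R ∧ x ≠ c.u3 ∧ y ≠ c.u3 ∧ x ≠ y ∧ c.R = {c.u3, x, y} ∧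
      G.Adj c.u3 x ∧ (G.Adj c.u3 y ∨ G.Adj x y) := by
  have hconn := c.Rconn
  have h2 : ∃ z, z ∈ c.R ∧ z ≠ c.u3 := by
    obtain ⟨a, b, d, hab, had, hbd, hR⟩ := card_eq_three.mp h
    have hu3 := c.u3_mem_R
    rw [hR] at hu3; simp at hu3
    rcases hu3 with rfl | rfl | rfl
    · exact ⟨b, by rw [hR]; simp, fun hh => hab hh.symm⟩
    · exact ⟨a, by rw [hR]; simp, hab⟩
    · exact ⟨a, by rw [hR]; simp, had⟩
  obtain ⟨z, hzR, hzne⟩ := h2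
  have hne : (⟨c.u3, by simpa using c.u3_mem_R⟩ : ↥(c.R : Set V)) ≠ ⟨z, by simpa using hzR⟩ :=
    fun hh => hzne (congrArg Subtype.val hh).symm
  obtain ⟨⟨x, hxmem'⟩, hxx⟩ := exists_neighbor hconn hne
  have hxmem : x ∈ c.R := by simpa using hxmem'
  have hadjx : G.Adj c.u3 x := hxx
  have hxne : x ≠ c.u3 := fun hh => G.irrefl (hh ▸ hadjx.symm)
  have hcard2 : ((c.R.erase c.u3).erase x).card = 1 := by
    rw [card_erase_of_mem (mem_erase.mpr ⟨hxne, hxmem⟩), card_erase_of_mem c.u3_mem_R, h]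
  obtain ⟨y, hy⟩ := card_eq_one.mp hcard2
  have hymem' : y ∈ (c.R.erase c.u3).erase x := by rw [hy]; simp
  have hyx : y ≠ x := (mem_erase.mp hymem').1
  have hyu3 : y ≠ c.u3 := (mem_erase.mp (mem_erase.mp hymem').2).1
  have hymem : y ∈ c.R := (mem_erase.mp (mem_erase.mp hymem').2).2
  have hRxy : c.R = {c.u3, x, y} := by
    apply Finset.eq_of_subset_of_card_le
    · intro w hw
      simp only [mem_insert, mem_singleton]
      by_cases h1 : w = c.u3
      · left; exact h1
      by_cases h2 : w = x
      · right; left; exact h2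
      right; right
      have : w ∈ (c.R.erase c.u3).erase x := mem_erase.mpr ⟨h2, mem_erase.mpr ⟨h1, hw⟩⟩
      rw [hy, mem_singleton] at this
      exact this
    · rw [h]
      refine le_trans (card_insert_le _ _) ?_
      have := card_insert_le x ({y} : Finset V)
      simp only [card_singleton] at this ⊢
      omega
  have hney : (⟨y, by simpa using hymem⟩ : ↥(c.R : Set V)) ≠ ⟨c.u3, by simpa using c.u3_mem_R⟩ :=
    fun hh => hyu3 (congrArg Subtype.val hh)
  obtain ⟨⟨w, hwmem'⟩, hbb⟩ := exists_neighbor hconn hney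
  have hwmem : w ∈ c.R := by simpa using hwmem'
  have hadjyb : G.Adj y w := hbb
  have hbbney : w ≠ y := fun hh => G.irrefl (hh ▸ hadjyb.symm)
  rw [hRxy] at hwmem
  simp only [mem_insert, mem_singleton] at hwmem
  refine ⟨x, y, hxmem, hymem, hxne, hyu3, fun hh => hyx hh.symm, hRxy, hadjx, ?_⟩
  rcases hwmem with hh | hh | hh
  · left; rw [hh] at hadjyb; exact hadjyb.symm
  · right; rw [hh] at hadjyb; exact hadjyb.symm
  · exact absurd hh hbbney

end Cut


lemma L5 [Fintype V] (hc : G.Connected) (h5 : Fintype.card V = 5) :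
    (∃ S : Finset V, S.card ≤ 2 ∧ Cov G S) ∨
    ∃ p1 p2 p3 p4 p5 : V, (∀ v : V, v = p1 ∨ v = p2 ∨ v = p3 ∨ v = p4 ∨ v = p5) ∧
      G.Adj p1 p2 ∧ G.Adj p2 p3 ∧ G.Adj p3 p4 ∧ G.Adj p4 p5 ∧
      p1 ≠ p2 ∧ p1 ≠ p3 ∧ p1 ≠ p4 ∧ p1 ≠ p5 ∧ p2 ≠ p3 ∧ p2 ≠ p4 ∧ p2 ≠ p5 ∧
      p3 ≠ p4 ∧ p3 ≠ p5 ∧ p4 ≠ p5 := by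
  rcases exists_small_or_cut hc (by omega) with hs | hcut
  · exact Or.inl hs
  obtain ⟨c⟩ := hcut
  have hk : 1 ≤ c.C.card := card_pos.mpr ⟨c.u1, c.u1_mem_C⟩
  have hl : 1 ≤ c.GC.card := card_pos.mpr ⟨c.u0, c.u0_mem_GC⟩
  have hm1 : 1 ≤ c.R.card := card_pos.mpr ⟨c.u3, c.u3_mem_R⟩
  have hcB := c.card_B
  have hsplit := c.card_split
  rw [h5] at hsplit
  by_cases hm : c.R.card = 1
  · left
    refine ⟨insert c.u2 c.C', ?_, c.cov_m1 hm⟩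
    have h1 : c.C'.card ≤ c.C.card := c.C'_le_C
    have h2 : c.C'.card ≤ c.GC.card := c.C'_le_GC
    have := card_insert_le c.u2 c.C'
    omega
  · have hm' : c.R.card = 2 := by omega
    obtain ⟨x, hxne, hxmem, hxR, hadj⟩ := c.R_two hm'
    right
    have n1 : x ≠ c.u3 := hxne
    have n2 : x ≠ c.u2 := c.ne_RB hxmem c.u2_mem_B
    have n3 : x ≠ c.u1 := c.ne_RB hxmem c.u1_mem_B
    have n4 : x ≠ c.u0 := c.ne_RB hxmem c.u0_mem_B
    have n5 : c.u3 ≠ c.u2 := c.ne_RB c.u3_mem_R c.u2_mem_B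
    have n6 : c.u3 ≠ c.u1 := c.ne_RB c.u3_mem_R c.u1_mem_B
    have n7 : c.u3 ≠ c.u0 := c.ne_RB c.u3_mem_R c.u0_mem_B
    have n8 : c.u2 ≠ c.u1 := Ne.symm c.u1_ne_u2
    have n9 : c.u2 ≠ c.u0 := Ne.symm c.u0_ne_u2
    have n10 : c.u1 ≠ c.u0 := Ne.symm c.u0_ne_u1
    refine ⟨x, c.u3, c.u2, c.u1, c.u0, ?_, hadj.symm, c.adj23.symm, c.adj12.symm, c.adj01.symm,
      n1, n2, n3, n4, n5, n6, n7, n8, n9, n10⟩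
    have hF : ({x, c.u3, c.u2, c.u1, c.u0} : Finset V) = univ := by
      apply eq_univ_of_card
      rw [card_insert_of_notMem (by simp [n1, n2, n3, n4]),
        card_insert_of_notMem (by simp [n5, n6, n7]),
        card_insert_of_notMem (by simp [n8, n9]),
        card_insert_of_notMem (by simp [n10]), card_singleton, h5]
    intro v
    have : v ∈ ({x, c.u3, c.u2, c.u1, c.u0} : Finset V) := hF ▸ mem_univ v
    simpa using this

lemma L6 [Fintype V] (hc : G.Connected) (h6 : Fintype.card V = 6) :
    (∃ S : Finset V, S.card ≤ 3 ∧ Cov G S) ∨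
    ∃ p1 p2 p3 p4 p5 p6 : V,
      (∀ v : V, v = p1 ∨ v = p2 ∨ v = p3 ∨ v = p4 ∨ v = p5 ∨ v = p6) ∧
      G.Adj p1 p2 ∧ G.Adj p2 p3 ∧ G.Adj p3 p4 ∧ G.Adj p4 p5 ∧ G.Adj p5 p6 ∧
      p1 ≠ p2 ∧ p1 ≠ p3 ∧ p1 ≠ p4 ∧ p1 ≠ p5 ∧ p1 ≠ p6 ∧ p2 ≠ p3 ∧ p2 ≠ p4 ∧ p2 ≠ p5 ∧
      p2 ≠ p6 ∧ p3 ≠ p4 ∧ p3 ≠ p5 ∧ p3 ≠ p6 ∧ p4 ≠ p5 ∧ p4 ≠ p6 ∧ p5 ≠ p6 := by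
  rcases exists_small_or_cut hc (by omega) with hs | hcut
  · obtain ⟨S, hS, hcov⟩ := hs
    exact Or.inl ⟨S, by omega, hcov⟩
  obtain ⟨c⟩ := hcut
  have hk : 1 ≤ c.C.card := card_pos.mpr ⟨c.u1, c.u1_mem_C⟩
  have hl : 1 ≤ c.GC.card := card_pos.mpr ⟨c.u0, c.u0_mem_GC⟩
  have hm1 : 1 ≤ c.R.card := card_pos.mpr ⟨c.u3, c.u3_mem_R⟩
  have hm'k : c.C'.card ≤ c.C.card := c.C'_le_C
  have hm'l : c.C'.card ≤ c.GC.card := c.C'_le_GC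
  have hcB := c.card_B
  have hsplit := c.card_split
  rw [h6] at hsplit
  by_cases hm : c.R.card = 1
  · left
    refine ⟨insert c.u2 c.C', ?_, c.cov_m1 hm⟩
    have := card_insert_le c.u2 c.C'
    omega
  by_cases hm2 : c.R.card = 2
  · left
    refine ⟨insert c.u2 (insert c.u3 c.C'), ?_, c.cov_m2 hm2⟩
    have h1 := card_insert_le c.u2 (insert c.u3 c.C')
    have h2 := card_insert_le c.u3 c.C'
    omega
  have hm3 : c.R.card = 3 := by omega
  obtain ⟨x, y, hxmem, hymem, hxne, hyne, hxy, hRxy, hadjx, hy2⟩ := c.R_three hm3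
  rcases hy2 with hadjy | hadjy
  · left
    refine ⟨insert c.u2 (insert c.u3 c.C'), ?_, ?_⟩
    · have h1 := card_insert_le c.u2 (insert c.u3 c.C')
      have h2 := card_insert_le c.u3 c.C'
      omega
    · intro v
      rcases c.partition v with hv | hv
      · exact c.covB_std (mem_insert_self _ _)
          (fun z hz => mem_insert_of_mem (mem_insert_of_mem hz)) v hv
      · rw [hRxy] at hv
        simp only [mem_insert, mem_singleton] at hv
        rcases hv with rfl | rfl | rfl
        · exact covAt_adj (mem_insert_self _ _) c.adj23.symm
        · exact covAt_adj (mem_insert_of_mem (mem_insert_self _ _)) hadjx.symm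
        · exact covAt_adj (mem_insert_of_mem (mem_insert_self _ _)) hadjy.symm
  · right
    have n1 : y ≠ x := Ne.symm hxy
    have n2 : y ≠ c.u3 := hyne
    have n3 : y ≠ c.u2 := c.ne_RB hymem c.u2_mem_B
    have n4 : y ≠ c.u1 := c.ne_RB hymem c.u1_mem_B
    have n5 : y ≠ c.u0 := c.ne_RB hymem c.u0_mem_B
    have n6 : x ≠ c.u3 := hxne
    have n7 : x ≠ c.u2 := c.ne_RB hxmem c.u2_mem_B
    have n8 : x ≠ c.u1 := c.ne_RB hxmem c.u1_mem_B
    have n9 : x ≠ c.u0 := c.ne_RB hxmem c.u0_mem_B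
    have n10 : c.u3 ≠ c.u2 := c.ne_RB c.u3_mem_R c.u2_mem_B
    have n11 : c.u3 ≠ c.u1 := c.ne_RB c.u3_mem_R c.u1_mem_B
    have n12 : c.u3 ≠ c.u0 := c.ne_RB c.u3_mem_R c.u0_mem_B
    have n13 : c.u2 ≠ c.u1 := Ne.symm c.u1_ne_u2
    have n14 : c.u2 ≠ c.u0 := Ne.symm c.u0_ne_u2
    have n15 : c.u1 ≠ c.u0 := Ne.symm c.u0_ne_u1
    refine ⟨y, x, c.u3, c.u2, c.u1, c.u0, ?_, hadjy.symm, hadjx.symm, c.adj23.symm,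
      c.adj12.symm, c.adj01.symm,
      n1, n2, n3, n4, n5, n6, n7, n8, n9, n10, n11, n12, n13, n14, n15⟩
    have hF : ({y, x, c.u3, c.u2, c.u1, c.u0} : Finset V) = univ := by
      apply eq_univ_of_card
      rw [card_insert_of_notMem (by simp [n1, n2, n3, n4, n5]),
        card_insert_of_notMem (by simp [n6, n7, n8, n9]),
        card_insert_of_notMem (by simp [n10, n11, n12]),
        card_insert_of_notMem (by simp [n13, n14]),
        card_insert_of_notMem (by simp [n15]), card_singleton, h6]
    intro v
    have : v ∈ ({y, x, c.u3, c.u2, c.u1, c.u0} : Finset V) := hF ▸ mem_univ v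
    simpa using this


lemma card_le4 {a b c d : V} : ({a, b, c, d} : Finset V).card ≤ 4 := by
  have h1 := card_insert_le a ({b, c, d} : Finset V)
  have h2 := card_insert_le b ({c, d} : Finset V)
  have h3 := card_insert_le c ({d} : Finset V)
  have h4 : ({d} : Finset V).card = 1 := card_singleton d
  omega

lemma card_le5 {a b c d e : V} : ({a, b, c, d, e} : Finset V).card ≤ 5 := by
  have h1 := card_insert_le a ({b, c, d, e} : Finset V)
  have h2 : ({b, c, d, e} : Finset V).card ≤ 4 := card_le4
  omega

namespace Cut
variable [Fintype V] (c : Cut G)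

lemma adj_u2_of_u3eq {p : V} (hj : c.u3 = p) : G.Adj p c.u2 := by
  rw [← hj]; exact c.adj23.symm

lemma path5 (hm'1 : c.C'.card = 1) (p1 p2 p3 p4 p5 : V)
    (h1R : p1 ∈ c.R) (h2R : p2 ∈ c.R) (h3R : p3 ∈ c.R) (h4R : p4 ∈ c.R) (h5R : p5 ∈ c.R)
    (hexh : ∀ v ∈ c.R, v = p1 ∨ v = p2 ∨ v = p3 ∨ v = p4 ∨ v = p5)
    (a12 : G.Adj p1 p2) (a23 : G.Adj p2 p3) (a34 : G.Adj p3 p4) (a45 : G.Adj p4 p5)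
    (hne13 : p1 ≠ p3) (hne24 : p2 ≠ p4)
    (hu3 : c.u3 = p1 ∨ c.u3 = p2 ∨ c.u3 = p3) :
    ∃ S : Finset V, S.card ≤ 4 ∧ Cov G S := by
  rcases hu3 with hj | hj | hj
  · refine ⟨{c.u1, c.u2, p3, p4}, card_le4, ?_⟩
    intro v
    rcases c.partition v with hv | hv
    · exact c.covB_u1u2 hm'1 (by simp) (by simp) v hv
    · rcases hexh v hv with rfl | rfl | rfl | rfl | rfl
      · exact covAt_adj (u := c.u2) (by simp) (c.adj_u2_of_u3eq hj)
      · exact covAt_adj (u := p3) (by simp) a23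
      · exact covAt_adj (u := p4) (by simp) a34
      · exact covAt_adj (u := p3) (by simp) a34.symm
      · exact covAt_adj (u := p4) (by simp) a45.symm
  · refine ⟨{c.u1, c.u2, p3, p4}, card_le4, ?_⟩
    intro v
    rcases c.partition v with hv | hv
    · exact c.covB_u1u2 hm'1 (by simp) (by simp) v hv
    · rcases hexh v hv with rfl | rfl | rfl | rfl | rfl
      · exact covAt_pair (u := c.u2) (w := p3) (by simp) (by simp)
          (Ne.symm (c.ne_RB h3R c.u2_mem_B)) (c.ne_RB h1R c.u2_mem_B) hne13
          (near2_of_mid a12 (c.adj_u2_of_u3eq hj)) (near2_of_mid a12 a23)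
      · exact covAt_adj (u := c.u2) (by simp) (c.adj_u2_of_u3eq hj)
      · exact covAt_adj (u := p4) (by simp) a34
      · exact covAt_adj (u := p3) (by simp) a34.symm
      · exact covAt_adj (u := p4) (by simp) a45.symm
  · refine ⟨{c.u1, c.u2, p2, p4}, card_le4, ?_⟩
    intro v
    rcases c.partition v with hv | hv
    · exact c.covB_u1u2 hm'1 (by simp) (by simp) v hv
    · rcases hexh v hv with rfl | rfl | rfl | rfl | rfl
      · exact covAt_adj (u := p2) (by simp) a12
      · exact covAt_pair (u := p4) (w := c.u2) (by simp) (by simp)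
          (c.ne_RB h4R c.u2_mem_B) hne24 (c.ne_RB h2R c.u2_mem_B)
          (near2_of_mid a23 a34) (near2_of_mid a23 (c.adj_u2_of_u3eq hj))
      · exact covAt_adj (u := c.u2) (by simp) (c.adj_u2_of_u3eq hj)
      · exact covAt_pair (u := p2) (w := c.u2) (by simp) (by simp)
          (c.ne_RB h2R c.u2_mem_B) (Ne.symm hne24) (c.ne_RB h4R c.u2_mem_B)
          (near2_of_mid a34.symm a23.symm) (near2_of_mid a34.symm (c.adj_u2_of_u3eq hj))
      · exact covAt_adj (u := p4) (by simp) a45.symm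

lemma path6 (hm'1 : c.C'.card = 1) (p1 p2 p3 p4 p5 p6 : V)
    (h1R : p1 ∈ c.R) (h2R : p2 ∈ c.R) (h3R : p3 ∈ c.R) (h4R : p4 ∈ c.R) (h5R : p5 ∈ c.R)
    (h6R : p6 ∈ c.R)
    (hexh : ∀ v ∈ c.R, v = p1 ∨ v = p2 ∨ v = p3 ∨ v = p4 ∨ v = p5 ∨ v = p6)
    (a12 : G.Adj p1 p2) (a23 : G.Adj p2 p3) (a34 : G.Adj p3 p4) (a45 : G.Adj p4 p5)
    (a56 : G.Adj p5 p6) (hne24 : p2 ≠ p4)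
    (hu3 : c.u3 = p1 ∨ c.u3 = p2 ∨ c.u3 = p3) :
    ∃ S : Finset V, S.card ≤ 5 ∧ Cov G S := by
  have hcovR2 : c.u3 = p1 ∨ c.u3 = p3 →
      CovAt G ({c.u1, c.u2, p2, p4, p5} : Finset V) p2 := by
    intro hj
    rcases hj with hj | hj
    · exact covAt_pair (u := c.u2) (w := p4) (by simp) (by simp)
        (Ne.symm (c.ne_RB h4R c.u2_mem_B)) (c.ne_RB h2R c.u2_mem_B) hne24
        (near2_of_mid a12.symm (c.adj_u2_of_u3eq hj)) (near2_of_mid a23 a34)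
    · exact covAt_pair (u := c.u2) (w := p4) (by simp) (by simp)
        (Ne.symm (c.ne_RB h4R c.u2_mem_B)) (c.ne_RB h2R c.u2_mem_B) hne24
        (near2_of_mid a23 (c.adj_u2_of_u3eq hj)) (near2_of_mid a23 a34)
  refine ⟨{c.u1, c.u2, p2, p4, p5}, card_le5, ?_⟩
  intro v
  rcases c.partition v with hv | hv
  · exact c.covB_u1u2 hm'1 (by simp) (by simp) v hv
  · rcases hexh v hv with rfl | rfl | rfl | rfl | rfl | rfl
    · rcases hu3 with hj | hj | hj
      · exact covAt_adj (u := c.u2) (by simp) (c.adj_u2_of_u3eq hj)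
      · exact covAt_adj (u := p2) (by simp) a12
      · exact covAt_adj (u := p2) (by simp) a12
    · rcases hu3 with hj | hj | hj
      · exact hcovR2 (Or.inl hj)
      · exact covAt_adj (u := c.u2) (by simp) (c.adj_u2_of_u3eq hj)
      · exact hcovR2 (Or.inr hj)
    · exact covAt_adj (u := p4) (by simp) a34
    · exact covAt_adj (u := p5) (by simp) a45
    · exact covAt_adj (u := p4) (by simp) a45.symm
    · exact covAt_adj (u := p5) (by simp) a56.symm

lemma path6' (p1 p2 p3 p4 p5 p6 : V)
    (h1R : p1 ∈ c.R) (h2R : p2 ∈ c.R) (h3R : p3 ∈ c.R) (h4R : p4 ∈ c.R) (h5R : p5 ∈ c.R)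
    (h6R : p6 ∈ c.R)
    (hexh : ∀ v ∈ c.R, v = p1 ∨ v = p2 ∨ v = p3 ∨ v = p4 ∨ v = p5 ∨ v = p6)
    (a12 : G.Adj p1 p2) (a23 : G.Adj p2 p3) (a34 : G.Adj p3 p4) (a45 : G.Adj p4 p5)
    (a56 : G.Adj p5 p6) (hne24 : p2 ≠ p4)
    (hu3 : c.u3 = p1 ∨ c.u3 = p2 ∨ c.u3 = p3) :
    ∃ S : Finset V, S.card ≤ c.C'.card + 4 ∧ Cov G S := by
  refine ⟨c.C' ∪ {c.u2, p2, p4, p5}, ?_, ?_⟩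
  · have h1 := card_union_le c.C' ({c.u2, p2, p4, p5} : Finset V)
    have h2 : ({c.u2, p2, p4, p5} : Finset V).card ≤ 4 := card_le4
    omega
  intro v
  rcases c.partition v with hv | hv
  · exact c.covB_std (by simp) subset_union_left v hv
  · have hmem2 : p2 ∈ c.C' ∪ {c.u2, p2, p4, p5} := by simp
    have hmem4 : p4 ∈ c.C' ∪ {c.u2, p2, p4, p5} := by simp
    have hmem5 : p5 ∈ c.C' ∪ {c.u2, p2, p4, p5} := by simp
    have hmemu2 : c.u2 ∈ c.C' ∪ {c.u2, p2, p4, p5} := by simp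
    rcases hexh v hv with rfl | rfl | rfl | rfl | rfl | rfl
    · rcases hu3 with hj | hj | hj
      · exact covAt_adj hmemu2 (c.adj_u2_of_u3eq hj)
      · exact covAt_adj hmem2 a12
      · exact covAt_adj hmem2 a12
    · rcases hu3 with hj | hj | hj
      · exact covAt_pair hmemu2 hmem4
          (Ne.symm (c.ne_RB h4R c.u2_mem_B)) (c.ne_RB h2R c.u2_mem_B) hne24
          (near2_of_mid a12.symm (c.adj_u2_of_u3eq hj)) (near2_of_mid a23 a34)
      · exact covAt_adj hmemu2 (c.adj_u2_of_u3eq hj)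
      · exact covAt_pair hmemu2 hmem4
          (Ne.symm (c.ne_RB h4R c.u2_mem_B)) (c.ne_RB h2R c.u2_mem_B) hne24
          (near2_of_mid a23 (c.adj_u2_of_u3eq hj)) (near2_of_mid a23 a34)
    · exact covAt_adj hmem4 a34
    · exact covAt_adj hmem5 a45
    · exact covAt_adj hmem4 a45.symm
    · exact covAt_adj hmem5 a56.symm

end Cut


universe u

set_option maxHeartbeats 3200000 in
theorem key : ∀ (n : ℕ) (V : Type u) [Fintype V] (G : SimpleGraph V), G.Connected →
    Fintype.card V = n → 2 ≤ n → ∃ S : Finset V, 3 * S.card ≤ A n ∧ Cov G S := by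
  intro n
  induction n using Nat.strong_induction_on with
  | _ n IH =>
    intro V _ G hc hcard h2
    rcases exists_small_or_cut hc (by omega) with ⟨S, hS, hcov⟩ | hcut
    · exact ⟨S, by have := A_ge6 n; omega, hcov⟩
    obtain ⟨c⟩ := hcut
    have hk : 1 ≤ c.C.card := card_pos.mpr ⟨c.u1, c.u1_mem_C⟩
    have hl : 1 ≤ c.GC.card := card_pos.mpr ⟨c.u0, c.u0_mem_GC⟩
    have hm'1 : 1 ≤ c.C'.card := c.one_le_C'
    have hm'k : c.C'.card ≤ c.C.card := c.C'_le_C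
    have hm'l : c.C'.card ≤ c.GC.card := c.C'_le_GC
    have hcB := c.card_B
    have hsplit := c.card_split
    rw [hcard] at hsplit
    have hm1 : 1 ≤ c.R.card := card_pos.mpr ⟨c.u3, c.u3_mem_R⟩
    by_cases hm : c.R.card = 1
    · refine ⟨insert c.u2 c.C', ?_, c.cov_m1 hm⟩
      have := card_insert_le c.u2 c.C'
      unfold A; split_ifs <;> omega
    by_cases hm2 : c.R.card = 2
    · refine ⟨insert c.u2 (insert c.u3 c.C'), ?_, c.cov_m2 hm2⟩
      have h1 := card_insert_le c.u2 (insert c.u3 c.C')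
      have h2 := card_insert_le c.u3 c.C'
      unfold A; split_ifs <;> omega
    by_cases hm3 : c.R.card = 3
    · obtain ⟨x, y, hxmem, hymem, hxne, hyne, hxy, hRxy, hadjx, hy2⟩ := c.R_three hm3
      rcases hy2 with hadjy | hadjy
      · refine ⟨insert c.u2 (insert c.u3 c.C'), ?_, ?_⟩
        · have h1 := card_insert_le c.u2 (insert c.u3 c.C')
          have h2 := card_insert_le c.u3 c.C'
          unfold A; split_ifs <;> omega
        · intro v
          rcases c.partition v with hv | hv
          · exact c.covB_std (mem_insert_self _ _)
              (fun z hz => mem_insert_of_mem (mem_insert_of_mem hz)) v hv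
          · rw [hRxy] at hv
            simp only [mem_insert, mem_singleton] at hv
            rcases hv with rfl | rfl | rfl
            · exact covAt_adj (mem_insert_self _ _) c.adj23.symm
            · exact covAt_adj (mem_insert_of_mem (mem_insert_self _ _)) hadjx.symm
            · exact covAt_adj (mem_insert_of_mem (mem_insert_self _ _)) hadjy.symm
      · by_cases hm'2 : 2 ≤ c.C'.card
        · refine ⟨c.C' ∪ {c.u3, x}, ?_, ?_⟩
          · have h1 := card_union_le c.C' ({c.u3, x} : Finset V)
            have h2 := card_insert_le c.u3 ({x} : Finset V)
            have h3 : ({x} : Finset V).card = 1 := card_singleton x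
            unfold A; split_ifs <;> omega
          · intro v
            rcases c.partition v with hv | hv
            · exact c.covB_noU2 hm'2 subset_union_left (by simp) v hv
            · rw [hRxy] at hv
              simp only [mem_insert, mem_singleton] at hv
              rcases hv with rfl | rfl | rfl
              · exact covAt_adj (u := x) (by simp) hadjx
              · exact covAt_adj (u := c.u3) (by simp) hadjx.symm
              · exact covAt_adj (u := x) (by simp) hadjy.symm
        · refine ⟨{c.u1, c.u2, c.u3, x}, ?_, ?_⟩
          · have h4 : ({c.u1, c.u2, c.u3, x} : Finset V).card ≤ 4 := card_le4
            unfold A; split_ifs <;> omega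
          · intro v
            rcases c.partition v with hv | hv
            · exact c.covB_u1u2 (by omega) (by simp) (by simp) v hv
            · rw [hRxy] at hv
              simp only [mem_insert, mem_singleton] at hv
              rcases hv with rfl | rfl | rfl
              · exact covAt_adj (u := c.u2) (by simp) c.adj23.symm
              · exact covAt_adj (u := c.u3) (by simp) hadjx.symm
              · exact covAt_adj (u := x) (by simp) hadjy.symm
    · -- m ≥ 4
      have hm4 : 4 ≤ c.R.card := by omega
      have hmlt : c.R.card < n := by omega
      have hRcard : Fintype.card ↥((c.R : Finset V) : Set V) = c.R.card := by
        simpa using Fintype.card_coe c.R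
      have hIH : ∃ S' : Finset ↥((c.R : Finset V) : Set V),
          3 * S'.card ≤ A c.R.card ∧ Cov (G.induce ((c.R : Finset V) : Set V)) S' :=
        IH c.R.card hmlt _ (G.induce _) c.Rconn hRcard (by omega)
      by_cases hm56 : c.R.card = 5 ∨ c.R.card = 6
      · by_cases hm'3 : 3 ≤ c.C'.card
        · obtain ⟨S', hS', hcov'⟩ := hIH
          refine ⟨c.C' ∪ S'.image Subtype.val, ?_, ?_⟩
          · have h1 := card_union_le c.C' (S'.image Subtype.val)
            have h3 : (S'.image Subtype.val).card ≤ S'.card := card_image_le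
            rcases hm56 with h5 | h5 <;> (unfold A at hS' ⊢; split_ifs at hS' ⊢ <;> omega)
          · intro v
            rcases c.partition v with hv | hv
            · exact c.covB_C'only hm'3 subset_union_left v hv
            · exact (cov_lift hcov' (by simpa using hv)).mono subset_union_right
        · by_cases hm'2 : 2 ≤ c.C'.card
          · by_cases hbig : c.R.card = 5 ∨ 5 ≤ c.C.card + c.GC.card
            · obtain ⟨S', hS', hcov'⟩ := hIH
              refine ⟨insert c.u3 (c.C' ∪ S'.image Subtype.val), ?_, ?_⟩
              · have h1 := card_insert_le c.u3 (c.C' ∪ S'.image Subtype.val)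
                have h2 := card_union_le c.C' (S'.image Subtype.val)
                have h3 : (S'.image Subtype.val).card ≤ S'.card := card_image_le
                rcases hm56 with h5 | h5 <;> rcases hbig with hb | hb <;>
                  (unfold A at hS' ⊢; split_ifs at hS' ⊢ <;> omega)
              · intro v
                rcases c.partition v with hv | hv
                · refine c.covB_noU2 hm'2 ?_ (mem_insert_self _ _) v hv
                  exact fun z hz => mem_insert_of_mem (mem_union_left _ hz)
                · exact (cov_lift hcov' (by simpa using hv)).mono
                    (fun z hz => mem_insert_of_mem (mem_union_right _ hz))
            · push_neg at hbig
              have hm6 : c.R.card = 6 := by rcases hm56 with h | h; exact absurd h hbig.1; exact h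
              rcases L6 c.Rconn (hRcard.trans hm6) with ⟨S'', hS'', hcov''⟩ |
                ⟨q1, q2, q3, q4, q5, q6, hexh, b12, b23, b34, b45, b56,
                  e12, e13, e14, e15, e16, e23, e24, e25, e26, e34, e35, e36, e45, e46, e56⟩
              · refine ⟨insert c.u2 (c.C' ∪ S''.image Subtype.val), ?_, ?_⟩
                · have h1 := card_insert_le c.u2 (c.C' ∪ S''.image Subtype.val)
                  have h2 := card_union_le c.C' (S''.image Subtype.val)
                  have h3 : (S''.image Subtype.val).card ≤ S''.card := card_image_le
                  unfold A; split_ifs <;> omega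
                · intro v
                  rcases c.partition v with hv | hv
                  · exact c.covB_std (mem_insert_self _ _)
                      (fun z hz => mem_insert_of_mem (mem_union_left _ hz)) v hv
                  · exact (cov_lift hcov'' (by simpa using hv)).mono
                      (fun z hz => mem_insert_of_mem (mem_union_right _ hz))
              · -- path case, n = 11
                have hq1 : q1.val ∈ c.R := by simpa using q1.2
                have hq2 : q2.val ∈ c.R := by simpa using q2.2
                have hq3 : q3.val ∈ c.R := by simpa using q3.2
                have hq4 : q4.val ∈ c.R := by simpa using q4.2
                have hq5 : q5.val ∈ c.R := by simpa using q5.2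
                have hq6 : q6.val ∈ c.R := by simpa using q6.2
                have hexhV : ∀ v ∈ c.R, v = q1.val ∨ v = q2.val ∨ v = q3.val ∨ v = q4.val ∨
                    v = q5.val ∨ v = q6.val := by
                  intro v hv
                  have := hexh ⟨v, by simpa using hv⟩
                  rcases this with h | h | h | h | h | h
                  · exact Or.inl (congrArg Subtype.val h)
                  · exact Or.inr (Or.inl (congrArg Subtype.val h))
                  · exact Or.inr (Or.inr (Or.inl (congrArg Subtype.val h)))
                  · exact Or.inr (Or.inr (Or.inr (Or.inl (congrArg Subtype.val h))))
                  · exact Or.inr (Or.inr (Or.inr (Or.inr (Or.inl (congrArg Subtype.val h)))))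
                  · exact Or.inr (Or.inr (Or.inr (Or.inr (Or.inr (congrArg Subtype.val h)))))
                have hexhV' : ∀ v ∈ c.R, v = q6.val ∨ v = q5.val ∨ v = q4.val ∨ v = q3.val ∨
                    v = q2.val ∨ v = q1.val := by
                  intro v hv; rcases hexhV v hv with h|h|h|h|h|h <;> tauto
                have hu3pos := hexhV c.u3 c.u3_mem_R
                have hgoal : ∃ S : Finset V, S.card ≤ c.C'.card + 4 ∧ Cov G S := by
                  rcases hu3pos with hj | hj | hj | hj | hj | hj
                  · exact c.path6' q1.val q2.val q3.val q4.val q5.val q6.val hq1 hq2 hq3 hq4 hq5 hq6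
                      hexhV b12 b23 b34 b45 b56
                      (fun hh => e24 (Subtype.ext hh)) (Or.inl hj)
                  · exact c.path6' q1.val q2.val q3.val q4.val q5.val q6.val hq1 hq2 hq3 hq4 hq5 hq6
                      hexhV b12 b23 b34 b45 b56
                      (fun hh => e24 (Subtype.ext hh)) (Or.inr (Or.inl hj))
                  · exact c.path6' q1.val q2.val q3.val q4.val q5.val q6.val hq1 hq2 hq3 hq4 hq5 hq6
                      hexhV b12 b23 b34 b45 b56
                      (fun hh => e24 (Subtype.ext hh)) (Or.inr (Or.inr hj))
                  · exact c.path6' q6.val q5.val q4.val q3.val q2.val q1.val hq6 hq5 hq4 hq3 hq2 hq1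
                      hexhV' b56.symm b45.symm b34.symm b23.symm b12.symm
                      (fun hh => e35 (Subtype.ext hh.symm)) (Or.inr (Or.inr hj))
                  · exact c.path6' q6.val q5.val q4.val q3.val q2.val q1.val hq6 hq5 hq4 hq3 hq2 hq1
                      hexhV' b56.symm b45.symm b34.symm b23.symm b12.symm
                      (fun hh => e35 (Subtype.ext hh.symm)) (Or.inr (Or.inl hj))
                  · exact c.path6' q6.val q5.val q4.val q3.val q2.val q1.val hq6 hq5 hq4 hq3 hq2 hq1
                      hexhV' b56.symm b45.symm b34.symm b23.symm b12.symm
                      (fun hh => e35 (Subtype.ext hh.symm)) (Or.inl hj)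
                obtain ⟨S, hScard, hcovS⟩ := hgoal
                refine ⟨S, ?_, hcovS⟩
                unfold A; split_ifs <;> omega
          · -- C'.card = 1
            have hm'eq : c.C'.card = 1 := by omega
            by_cases hb4 : 3 ≤ c.C.card + c.GC.card
            · obtain ⟨S', hS', hcov'⟩ := hIH
              refine ⟨insert c.u1 (insert c.u2 (S'.image Subtype.val)), ?_, ?_⟩
              · have h1 := card_insert_le c.u1 (insert c.u2 (S'.image Subtype.val))
                have h2 := card_insert_le c.u2 (S'.image Subtype.val)
                have h3 : (S'.image Subtype.val).card ≤ S'.card := card_image_le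
                rcases hm56 with h5 | h5 <;> (unfold A at hS' ⊢; split_ifs at hS' ⊢ <;> omega)
              · intro v
                rcases c.partition v with hv | hv
                · exact c.covB_u1u2 hm'eq (by simp) (by simp) v hv
                · exact (cov_lift hcov' (by simpa using hv)).mono
                    (fun z hz => mem_insert_of_mem (mem_insert_of_mem hz))
            · -- b = 3
              have hk1 : c.C.card = 1 := by omega
              have hl1 : c.GC.card = 1 := by omega
              rcases hm56 with hm5 | hm6
              · -- m = 5, n = 8 : use L5
                rcases L5 c.Rconn (hRcard.trans hm5) with ⟨S'', hS'', hcov''⟩ |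
                  ⟨q1, q2, q3, q4, q5, hexh, b12, b23, b34, b45,
                    e12, e13, e14, e15, e23, e24, e25, e34, e35, e45⟩
                · refine ⟨insert c.u1 (insert c.u2 (S''.image Subtype.val)), ?_, ?_⟩
                  · have h1 := card_insert_le c.u1 (insert c.u2 (S''.image Subtype.val))
                    have h2 := card_insert_le c.u2 (S''.image Subtype.val)
                    have h3 : (S''.image Subtype.val).card ≤ S''.card := card_image_le
                    unfold A; split_ifs <;> omega
                  · intro v
                    rcases c.partition v with hv | hv
                    · exact c.covB_u1u2 hm'eq (by simp) (by simp) v hv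
                    · exact (cov_lift hcov'' (by simpa using hv)).mono
                        (fun z hz => mem_insert_of_mem (mem_insert_of_mem hz))
                · have hq1 : q1.val ∈ c.R := by simpa using q1.2
                  have hq2 : q2.val ∈ c.R := by simpa using q2.2
                  have hq3 : q3.val ∈ c.R := by simpa using q3.2
                  have hq4 : q4.val ∈ c.R := by simpa using q4.2
                  have hq5 : q5.val ∈ c.R := by simpa using q5.2
                  have hexhV : ∀ v ∈ c.R, v = q1.val ∨ v = q2.val ∨ v = q3.val ∨ v = q4.val ∨
                      v = q5.val := by
                    intro v hv
                    have := hexh ⟨v, by simpa using hv⟩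
                    rcases this with h | h | h | h | h
                    · exact Or.inl (congrArg Subtype.val h)
                    · exact Or.inr (Or.inl (congrArg Subtype.val h))
                    · exact Or.inr (Or.inr (Or.inl (congrArg Subtype.val h)))
                    · exact Or.inr (Or.inr (Or.inr (Or.inl (congrArg Subtype.val h))))
                    · exact Or.inr (Or.inr (Or.inr (Or.inr (congrArg Subtype.val h))))
                  have hexhV' : ∀ v ∈ c.R, v = q5.val ∨ v = q4.val ∨ v = q3.val ∨ v = q2.val ∨
                      v = q1.val := by
                    intro v hv; rcases hexhV v hv with h|h|h|h|h <;> tauto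
                  have hu3pos := hexhV c.u3 c.u3_mem_R
                  have hgoal : ∃ S : Finset V, S.card ≤ 4 ∧ Cov G S := by
                    rcases hu3pos with hj | hj | hj | hj | hj
                    · exact c.path5 hm'eq q1.val q2.val q3.val q4.val q5.val hq1 hq2 hq3 hq4 hq5
                        hexhV b12 b23 b34 b45 (fun hh => e13 (Subtype.ext hh))
                        (fun hh => e24 (Subtype.ext hh)) (Or.inl hj)
                    · exact c.path5 hm'eq q1.val q2.val q3.val q4.val q5.val hq1 hq2 hq3 hq4 hq5
                        hexhV b12 b23 b34 b45 (fun hh => e13 (Subtype.ext hh))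
                        (fun hh => e24 (Subtype.ext hh)) (Or.inr (Or.inl hj))
                    · exact c.path5 hm'eq q1.val q2.val q3.val q4.val q5.val hq1 hq2 hq3 hq4 hq5
                        hexhV b12 b23 b34 b45 (fun hh => e13 (Subtype.ext hh))
                        (fun hh => e24 (Subtype.ext hh)) (Or.inr (Or.inr hj))
                    · exact c.path5 hm'eq q5.val q4.val q3.val q2.val q1.val hq5 hq4 hq3 hq2 hq1
                        hexhV' b45.symm b34.symm b23.symm b12.symm
                        (fun hh => e35 (Subtype.ext hh.symm)) (fun hh => e24 (Subtype.ext hh.symm))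
                        (Or.inr (Or.inl hj))
                    · exact c.path5 hm'eq q5.val q4.val q3.val q2.val q1.val hq5 hq4 hq3 hq2 hq1
                        hexhV' b45.symm b34.symm b23.symm b12.symm
                        (fun hh => e35 (Subtype.ext hh.symm)) (fun hh => e24 (Subtype.ext hh.symm))
                        (Or.inl hj)
                  obtain ⟨S, hScard, hcovS⟩ := hgoal
                  refine ⟨S, ?_, hcovS⟩
                  unfold A; split_ifs <;> omega
              · -- m = 6, n = 9 : use L6
                rcases L6 c.Rconn (hRcard.trans hm6) with ⟨S'', hS'', hcov''⟩ |
                  ⟨q1, q2, q3, q4, q5, q6, hexh, b12, b23, b34, b45, b56,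
                    e12, e13, e14, e15, e16, e23, e24, e25, e26, e34, e35, e36, e45, e46, e56⟩
                · refine ⟨insert c.u1 (insert c.u2 (S''.image Subtype.val)), ?_, ?_⟩
                  · have h1 := card_insert_le c.u1 (insert c.u2 (S''.image Subtype.val))
                    have h2 := card_insert_le c.u2 (S''.image Subtype.val)
                    have h3 : (S''.image Subtype.val).card ≤ S''.card := card_image_le
                    unfold A; split_ifs <;> omega
                  · intro v
                    rcases c.partition v with hv | hv
                    · exact c.covB_u1u2 hm'eq (by simp) (by simp) v hv
                    · exact (cov_lift hcov'' (by simpa using hv)).mono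
                        (fun z hz => mem_insert_of_mem (mem_insert_of_mem hz))
                · have hq1 : q1.val ∈ c.R := by simpa using q1.2
                  have hq2 : q2.val ∈ c.R := by simpa using q2.2
                  have hq3 : q3.val ∈ c.R := by simpa using q3.2
                  have hq4 : q4.val ∈ c.R := by simpa using q4.2
                  have hq5 : q5.val ∈ c.R := by simpa using q5.2
                  have hq6 : q6.val ∈ c.R := by simpa using q6.2
                  have hexhV : ∀ v ∈ c.R, v = q1.val ∨ v = q2.val ∨ v = q3.val ∨ v = q4.val ∨
                      v = q5.val ∨ v = q6.val := by
                    intro v hv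
                    have := hexh ⟨v, by simpa using hv⟩
                    rcases this with h | h | h | h | h | h
                    · exact Or.inl (congrArg Subtype.val h)
                    · exact Or.inr (Or.inl (congrArg Subtype.val h))
                    · exact Or.inr (Or.inr (Or.inl (congrArg Subtype.val h)))
                    · exact Or.inr (Or.inr (Or.inr (Or.inl (congrArg Subtype.val h))))
                    · exact Or.inr (Or.inr (Or.inr (Or.inr (Or.inl (congrArg Subtype.val h)))))
                    · exact Or.inr (Or.inr (Or.inr (Or.inr (Or.inr (congrArg Subtype.val h)))))
                  have hexhV' : ∀ v ∈ c.R, v = q6.val ∨ v = q5.val ∨ v = q4.val ∨ v = q3.val ∨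
                      v = q2.val ∨ v = q1.val := by
                    intro v hv; rcases hexhV v hv with h|h|h|h|h|h <;> tauto
                  have hu3pos := hexhV c.u3 c.u3_mem_R
                  have hgoal : ∃ S : Finset V, S.card ≤ 5 ∧ Cov G S := by
                    rcases hu3pos with hj | hj | hj | hj | hj | hj
                    · exact c.path6 hm'eq q1.val q2.val q3.val q4.val q5.val q6.val
                        hq1 hq2 hq3 hq4 hq5 hq6 hexhV b12 b23 b34 b45 b56
                        (fun hh => e24 (Subtype.ext hh)) (Or.inl hj)
                    · exact c.path6 hm'eq q1.val q2.val q3.val q4.val q5.val q6.val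
                        hq1 hq2 hq3 hq4 hq5 hq6 hexhV b12 b23 b34 b45 b56
                        (fun hh => e24 (Subtype.ext hh)) (Or.inr (Or.inl hj))
                    · exact c.path6 hm'eq q1.val q2.val q3.val q4.val q5.val q6.val
                        hq1 hq2 hq3 hq4 hq5 hq6 hexhV b12 b23 b34 b45 b56
                        (fun hh => e24 (Subtype.ext hh)) (Or.inr (Or.inr hj))
                    · exact c.path6 hm'eq q6.val q5.val q4.val q3.val q2.val q1.val
                        hq6 hq5 hq4 hq3 hq2 hq1 hexhV' b56.symm b45.symm b34.symm b23.symm b12.symm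
                        (fun hh => e35 (Subtype.ext hh.symm)) (Or.inr (Or.inr hj))
                    · exact c.path6 hm'eq q6.val q5.val q4.val q3.val q2.val q1.val
                        hq6 hq5 hq4 hq3 hq2 hq1 hexhV' b56.symm b45.symm b34.symm b23.symm b12.symm
                        (fun hh => e35 (Subtype.ext hh.symm)) (Or.inr (Or.inl hj))
                    · exact c.path6 hm'eq q6.val q5.val q4.val q3.val q2.val q1.val
                        hq6 hq5 hq4 hq3 hq2 hq1 hexhV' b56.symm b45.symm b34.symm b23.symm b12.symm
                        (fun hh => e35 (Subtype.ext hh.symm)) (Or.inl hj)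
                  obtain ⟨S, hScard, hcovS⟩ := hgoal
                  refine ⟨S, ?_, hcovS⟩
                  unfold A; split_ifs <;> omega
      · -- m ∉ {5, 6} : generic IH case
        push_neg at hm56
        obtain ⟨S', hS', hcov'⟩ := hIH
        refine ⟨insert c.u2 (c.C' ∪ S'.image Subtype.val), ?_, ?_⟩
        · have h1 := card_insert_le c.u2 (c.C' ∪ S'.image Subtype.val)
          have h2 := card_union_le c.C' (S'.image Subtype.val)
          have h3 : (S'.image Subtype.val).card ≤ S'.card := card_image_le
          unfold A at hS' ⊢
          split_ifs at hS' ⊢ <;> omega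
        · intro v
          rcases c.partition v with hv | hv
          · exact c.covB_std (mem_insert_self _ _)
              (fun z hz => mem_insert_of_mem (mem_union_left _ hz)) v hv
          · exact (cov_lift hcov' (by simpa using hv)).mono
              (fun z hz => mem_insert_of_mem (mem_union_right _ hz))


end DTD

/-- A connected graph of order n ≥ 8 satisfies γ_t^d(G) ≤ 2(n-1)/3. -/
theorem dtd_le_two_thirds {V : Type*} [Fintype V] (G : SimpleGraph V)
    (hc : G.Connected) (hn : 8 ≤ Fintype.card V) :
    3 * dtdNum G ≤ 2 * (Fintype.card V - 1) := by
  obtain ⟨S, hS, hcov⟩ := DTD.key (Fintype.card V) V G hc rfl (by omega)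
  have hdtd : IsDTDSet G S := hcov.isDTDSet hc
  have hle : dtdNum G ≤ S.card := Nat.sInf_le ⟨S, hdtd, rfl⟩
  have hA : DTD.A (Fintype.card V) = 2 * Fintype.card V - 2 := DTD.A_eq (by omega)
  omega
end

section
/- Let G be a connected graph with minimum degree 2 in which the set L of vertices of degree at least 3 is nonempty and independent, every vertex of degree 2 has at least one neighbor of degree at least 3, and every maximal path of degree-2 vertices has exactly two vertices (so each degree-2 vertex has exactly one neighbor of degree ≥ 3 and one neighbor of degree 2). Then γ_t^d(G) ≤ n/2, where n is the order of G. -/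
open SimpleGraph

/-- If the large vertices (degree ≥ 3) of a connected graph G with minimum
degree 2 form a nonempty independent set, and every degree-2 vertex has one
neighbor of degree 2 and one large neighbor (every 2-path has order 2), then
γ_t^d(G) ≤ n/2. -/
theorem dtd_le_half_of_two_paths {V : Type*} [Fintype V] (G : SimpleGraph V)
    [DecidableRel G.Adj] (hc : G.Connected)
    (hδ : ∀ v : V, 2 ≤ G.degree v)
    (hL : ∃ v : V, 3 ≤ G.degree v)
    (hind : ∀ u v : V, 3 ≤ G.degree u → 3 ≤ G.degree v → ¬ G.Adj u v)
    (h2 : ∀ v : V, G.degree v = 2 →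
      ∃ u w : V, G.Adj v u ∧ G.Adj v w ∧ G.degree u = 2 ∧ 3 ≤ G.degree w) :
    2 * dtdNum G ≤ Fintype.card V := by
  classical
  set L : Finset V := Finset.univ.filter (fun v => 3 ≤ G.degree v) with hLdef
  have hdegpos : ∀ v : V, (G.neighborFinset v).Nonempty := by
    intro v
    rw [← Finset.card_pos, G.card_neighborFinset_eq_degree]
    have := hδ v; omega
  set n : V → V := fun v => (hdegpos v).choose with hndef
  have hn : ∀ v, G.Adj v (n v) := by
    intro v
    have := (hdegpos v).choose_spec
    rw [SimpleGraph.mem_neighborFinset] at this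
    exact this
  set S : Finset V := L ∪ L.image n with hSdef
  have hDTD : IsDTDSet G S := by
    intro v
    left
    by_cases hv : 3 ≤ G.degree v
    · refine ⟨n v, Finset.mem_union_right _ (Finset.mem_image_of_mem n ?_), hn v⟩
      simp [hLdef, hv]
    · have hdv : G.degree v = 2 := by have := hδ v; omega
      obtain ⟨u, w, hvu, hvw, hu2, hw3⟩ := h2 v hdv
      exact ⟨w, Finset.mem_union_left _ (by simp [hLdef, hw3]), hvw⟩
  have hdtd_le : dtdNum G ≤ S.card := Nat.sInf_le ⟨S, hDTD, rfl⟩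
  have hScard : S.card ≤ 2 * L.card := by
    calc S.card ≤ L.card + (L.image n).card := Finset.card_union_le _ _
      _ ≤ L.card + L.card := by
          have := Finset.card_image_le (f := n) (s := L); omega
      _ = 2 * L.card := by ring
  set D : Finset V := Finset.univ.filter (fun v => G.degree v = 2) with hDdef
  have hpart : L.card + D.card = Fintype.card V := by
    have h := Finset.card_filter_add_card_filter_not
      (s := (Finset.univ : Finset V)) (p := fun v => 3 ≤ G.degree v)
    have hD' : Finset.univ.filter (fun v => ¬ 3 ≤ G.degree v) = D := by
      ext v
      simp only [hDdef, Finset.mem_filter, Finset.mem_univ, true_and]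
      have := hδ v; omega
    rw [hD'] at h
    simpa [hLdef, Finset.card_univ] using h
  -- neighborhoods of large vertices are pairwise disjoint
  have hdisj : ∀ w1 ∈ L, ∀ w2 ∈ L, w1 ≠ w2 →
      Disjoint (G.neighborFinset w1) (G.neighborFinset w2) := by
    intro w1 hw1 w2 hw2 hne12
    simp only [hLdef, Finset.mem_filter, Finset.mem_univ, true_and] at hw1 hw2
    rw [Finset.disjoint_left]
    intro d hd1 hd2
    rw [SimpleGraph.mem_neighborFinset] at hd1 hd2
    have hdd : G.degree d = 2 := by
      by_contra h
      have h3 : 3 ≤ G.degree d := by have := hδ d; omega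
      exact hind w1 d hw1 h3 hd1
    obtain ⟨u, w, hdu, hdw, hu2, hw3⟩ := h2 d hdd
    have huw1 : u ≠ w1 := by intro h; rw [h] at hu2; omega
    have huw2 : u ≠ w2 := by intro h; rw [h] at hu2; omega
    have hsub : ({u, w1, w2} : Finset V) ⊆ G.neighborFinset d := by
      intro x hx
      simp only [Finset.mem_insert, Finset.mem_singleton] at hx
      rw [SimpleGraph.mem_neighborFinset]
      rcases hx with h | h | h
      · rw [h]; exact hdu
      · rw [h]; exact hd1.symm
      · rw [h]; exact hd2.symm
    have hcard3 : ({u, w1, w2} : Finset V).card = 3 := by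
      rw [Finset.card_insert_of_notMem (by simp [huw1, huw2]),
        Finset.card_insert_of_notMem (by simp [hne12]), Finset.card_singleton]
    have hle := Finset.card_le_card hsub
    rw [G.card_neighborFinset_eq_degree, hcard3] at hle
    omega
  have hbiU : (L.biUnion (fun w => G.neighborFinset w)).card = ∑ w ∈ L, G.degree w := by
    rw [Finset.card_biUnion hdisj]
    exact Finset.sum_congr rfl (fun w _ => G.card_neighborFinset_eq_degree w)
  have hsum_ge : 3 * L.card ≤ ∑ w ∈ L, G.degree w := by
    calc 3 * L.card = ∑ _w ∈ L, 3 := by rw [Finset.sum_const, smul_eq_mul, mul_comm]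
      _ ≤ _ := Finset.sum_le_sum (fun w hw => by
          simp only [hLdef, Finset.mem_filter, Finset.mem_univ, true_and] at hw
          exact hw)
  have hsubD : L.biUnion (fun w => G.neighborFinset w) ⊆ D := by
    intro d hd
    simp only [Finset.mem_biUnion] at hd
    obtain ⟨w, hwL, hdw⟩ := hd
    rw [SimpleGraph.mem_neighborFinset] at hdw
    simp only [hLdef, Finset.mem_filter, Finset.mem_univ, true_and] at hwL
    have hnot : ¬ 3 ≤ G.degree d := fun h3 => hind w d hwL h3 hdw
    simp only [hDdef, Finset.mem_filter, Finset.mem_univ, true_and]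
    have := hδ d; omega
  have hDge : 3 * L.card ≤ D.card := by
    have h1 := Finset.card_le_card hsubD
    omega
  omega
end
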